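/- arXiv:2304.09624 — 8 statements merged into one kernel-verified Lean document; each statement's English description precedes it below -/
import Mathlib

section
/- Let (E, d) be a Polish metric space with d ≤ 1 (or replace d by min(d,1)). Let x^n (n ∈ ℕ) and x be Borel measurable paths from [0,∞) to E. Then the associated pseudo-path measures μ_{x^n} converge weakly to μ_x as probability measures on E × [0,∞) if and only if ∫_0^∞ min(d(x^n(t), x(t)), 1) e^{-t} dt → 0 as n → ∞. -/
/-!
Both directions pass through the graph maps `t ↦ (x t, t)`, which turn `∫ G d(pseudoPath x)`
into `∫ G (x t, t) dμ`. If `∫ min (d (xₙ t) (y t)) 1 dμ → 0`, then `xₙ → y` in measure, so every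
subsequence has an a.e. convergent subsequence and dominated convergence applies to
`G (xₙ t, t)`.

Conversely, embed `E` isometrically into `ℓ^∞` (Kuratowski) and approximate `ι ∘ y`, in the
truncated `L¹` sense, by a bounded continuous `z` (first by simple functions, then by density of
bounded continuous functions in `L¹`). The test function `g (a, t) = min ‖ι a - z t‖ 1` satisfies
`min (d a (y t)) 1 ≤ g (a, t) + g (y t, t)`, and `∫ g (y t, t)` is small; weak convergence gives
`∫ g (xₙ t, t) → ∫ g (y t, t)`, hence `limsup ∫ min (d (xₙ t) (y t)) 1 ≤ 2 ∫ g (y t, t)`.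
-/

open MeasureTheory Topology Filter
open scoped ENNReal

/-- The exponential measure `e^{-t} dt` on `[0,∞)`. -/
noncomputable def expMeasure : Measure ℝ :=
  (volume.restrict (Set.Ici (0 : ℝ))).withDensity fun t => ENNReal.ofReal (Real.exp (-t))

/-- The pseudo-path measure associated with a measurable path `x : ℝ → E`. -/
noncomputable def pseudoPath {E : Type*} [MeasurableSpace E] (x : ℝ → E) :
    Measure (E × ℝ) :=
  Measure.map (fun t => (x t, t)) expMeasure

open scoped BoundedContinuousFunction

lemma min_one_le_min_one_add_min_one {a b c : ℝ} (h : a ≤ b + c) (hb : 0 ≤ b) (hc : 0 ≤ c) :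
    min a 1 ≤ min b 1 + min c 1 := by
  simp only [min_def]
  split_ifs <;> linarith

section FiniteMeasure

variable {X : Type*} [MeasurableSpace X] {μ : Measure X} [IsFiniteMeasure μ]

lemma integrable_min_one {f : X → ℝ} (hf : AEStronglyMeasurable f μ) (h0 : ∀ t, 0 ≤ f t) :
    Integrable (fun t => min (f t) 1) μ :=
  .of_bound (hf.inf aestronglyMeasurable_const) 1 <| .of_forall fun t => by
    rw [Real.norm_of_nonneg (le_min (h0 t) zero_le_one)]
    exact min_le_right _ _

lemma tendstoInMeasure_of_tendsto_integral_min_dist {ι E : Type*} [PseudoMetricSpace E]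
    [MeasurableSpace E] [BorelSpace E] [SecondCountableTopology E] {l : Filter ι}
    {x : ι → X → E} {y : X → E} (hx : ∀ i, Measurable (x i)) (hy : Measurable y)
    (h : Tendsto (fun i => ∫ t, min (dist (x i t) (y t)) 1 ∂μ) l (𝓝 0)) :
    TendstoInMeasure μ x l y := by
  refine tendstoInMeasure_iff_measureReal_dist.2 fun ε hε => ?_
  have hm : 0 < min ε 1 := lt_min hε one_pos
  have markov : ∀ i, μ.real {t | ε ≤ dist (x i t) (y t)}
      ≤ (∫ t, min (dist (x i t) (y t)) 1 ∂μ) / min ε 1 := fun i => by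
    rw [le_div_iff₀' hm]
    calc min ε 1 * μ.real {t | ε ≤ dist (x i t) (y t)}
        ≤ min ε 1 * μ.real {t | min ε 1 ≤ min (dist (x i t) (y t)) 1} :=
          mul_le_mul_of_nonneg_left (measureReal_mono <|
            Set.ofPred_subset_ofPred.2 fun t ht => min_le_min_right 1 ht) hm.le
      _ ≤ _ := mul_meas_ge_le_integral_of_nonneg
          (.of_forall fun t => le_min dist_nonneg zero_le_one)
          (integrable_min_one ((hx i).dist hy).aestronglyMeasurable fun _ => dist_nonneg) _
  exact tendsto_of_tendsto_of_tendsto_of_le_of_le tendsto_const_nhds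
    (by simpa using h.div_const (min ε 1)) (fun i => measureReal_nonneg) markov

lemma MeasureTheory.StronglyMeasurable.exists_simpleFunc_integral_min_norm_sub_lt {F : Type*}
    [NormedAddCommGroup F] {f : X → F} (hf : StronglyMeasurable f) {ε : ℝ} (hε : 0 < ε) :
    ∃ s : SimpleFunc X F, ∫ t, min ‖f t - s t‖ 1 ∂μ < ε := by
  have hmeas : ∀ n, AEStronglyMeasurable (fun t => min ‖f t - hf.approx n t‖ 1) μ := fun n =>
    (hf.sub (hf.approx n).stronglyMeasurable).norm.aestronglyMeasurable.inf
      aestronglyMeasurable_const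
  have hpt : ∀ t, Tendsto (fun n => min ‖f t - hf.approx n t‖ 1) atTop (𝓝 0) := fun t => by
    simpa using ((tendsto_const_nhds (x := f t)).sub (hf.tendsto_approx t)).norm.min
      (tendsto_const_nhds (x := (1 : ℝ)))
  have hlim : Tendsto (fun n => ∫ t, min ‖f t - hf.approx n t‖ 1 ∂μ) atTop (𝓝 0) := by
    simpa using tendsto_integral_of_dominated_convergence (fun _ => (1 : ℝ)) hmeas
      (integrable_const 1)
      (fun n => .of_forall fun t => by
        rw [Real.norm_of_nonneg (le_min (norm_nonneg _) zero_le_one)]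
        exact min_le_right _ _)
      (.of_forall hpt)
  obtain ⟨n, hn⟩ := (hlim.eventually (gt_mem_nhds hε)).exists
  exact ⟨hf.approx n, hn⟩

end FiniteMeasure

section Topological

variable {X : Type*} [MeasurableSpace X] [TopologicalSpace X] [NormalSpace X] [BorelSpace X]
  {μ : Measure X} [IsFiniteMeasure μ] [μ.WeaklyRegular]

lemma MeasureTheory.StronglyMeasurable.exists_boundedContinuous_integral_min_norm_sub_lt
    {F : Type*} [NormedAddCommGroup F] [NormedSpace ℝ F] {f : X → F} (hf : StronglyMeasurable f)
    {ε : ℝ} (hε : 0 < ε) :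
    ∃ z : X →ᵇ F, ∫ t, min ‖f t - z t‖ 1 ∂μ < ε := by
  obtain ⟨s, hs⟩ := hf.exists_simpleFunc_integral_min_norm_sub_lt (μ := μ) (half_pos hε)
  obtain ⟨z, hz, hz_int⟩ :=
    (s.integrable_of_isFiniteMeasure (μ := μ)).exists_boundedContinuous_integral_sub_le
      (half_pos hε)
  have hsz_int : Integrable (fun t => ‖s t - z t‖) μ :=
    (s.integrable_of_isFiniteMeasure.sub hz_int).norm
  have hfs_int : Integrable (fun t => min ‖f t - s t‖ 1) μ :=
    integrable_min_one (hf.sub s.stronglyMeasurable).norm.aestronglyMeasurable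
      fun _ => norm_nonneg _
  have hfz_int : Integrable (fun t => min ‖f t - z t‖ 1) μ :=
    integrable_min_one (hf.aestronglyMeasurable.sub hz_int.aestronglyMeasurable).norm
      fun _ => norm_nonneg _
  refine ⟨z, ?_⟩
  calc ∫ t, min ‖f t - z t‖ 1 ∂μ
      ≤ ∫ t, (min ‖f t - s t‖ 1 + ‖s t - z t‖) ∂μ :=
        integral_mono hfz_int (hfs_int.add hsz_int) fun t =>
          (min_one_le_min_one_add_min_one (norm_sub_le_norm_sub_add_norm_sub (f t) (s t) (z t))
            (norm_nonneg _) (norm_nonneg _)).trans (add_le_add_right (min_le_left _ _) _)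
    _ = ∫ t, min ‖f t - s t‖ 1 ∂μ + ∫ t, ‖s t - z t‖ ∂μ := integral_add hfs_int hsz_int
    _ < ε := by linarith

variable {E : Type*} [MetricSpace E] [SecondCountableTopology E] [MeasurableSpace E]
  [BorelSpace E]

lemma exists_boundedContinuous_min_dist_le_add {y : X → E} (hy : Measurable y) {ε : ℝ}
    (hε : 0 < ε) :
    ∃ g : E × X →ᵇ ℝ, (∀ a t, min (dist a (y t)) 1 ≤ g (a, t) + g (y t, t)) ∧
      ∫ t, g (y t, t) ∂μ < ε := by
  set ι := kuratowskiEmbedding E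
  have hι : Isometry ι := kuratowskiEmbedding.isometry E
  obtain ⟨z, hz⟩ := (hι.continuous.comp_stronglyMeasurable hy.stronglyMeasurable
    ).exists_boundedContinuous_integral_min_norm_sub_lt (μ := μ) hε
  let g : E × X →ᵇ ℝ := .mkOfBound
    ⟨fun p => min (dist (ι p.1) (z p.2)) 1, by have := hι.continuous; fun_prop⟩ 1 fun p q =>
      Real.dist_le_of_mem_Icc_01 ⟨le_min dist_nonneg zero_le_one, min_le_right _ _⟩
        ⟨le_min dist_nonneg zero_le_one, min_le_right _ _⟩
  refine ⟨g, fun a t => ?_, by simpa [g, dist_eq_norm] using hz⟩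
  rw [← hι.dist_eq]
  exact min_one_le_min_one_add_min_one (dist_triangle_right _ _ _) dist_nonneg dist_nonneg

end Topological

section Graph

variable {X : Type*} [MeasurableSpace X] [TopologicalSpace X] [OpensMeasurableSpace X]
  {μ : Measure X} {E : Type*} [MetricSpace E] [SecondCountableTopology E] [MeasurableSpace E]
  [BorelSpace E]

lemma integral_map_graph {x : X → E} (hx : Measurable x) {g : E × X → ℝ} (hg : Continuous g) :
    ∫ p, g p ∂(μ.map fun t => (x t, t)) = ∫ t, g (x t, t) ∂μ :=
  integral_map (hx.prodMk measurable_id).aemeasurable hg.aestronglyMeasurable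

variable [IsFiniteMeasure μ]

lemma BoundedContinuousFunction.integrable_comp_graph (G : E × X →ᵇ ℝ) {x : X → E}
    (hx : Measurable x) : Integrable (fun t => G (x t, t)) μ :=
  .of_bound (G.continuous.measurable.comp (hx.prodMk measurable_id)).aestronglyMeasurable ‖G‖
    (.of_forall fun _ => G.norm_coe_le_norm _)

lemma MeasureTheory.TendstoInMeasure.tendsto_integral_boundedContinuousFunction
    {x : ℕ → X → E} {y : X → E} (hx : ∀ n, Measurable (x n))
    (hxy : TendstoInMeasure μ x atTop y) (G : E × X →ᵇ ℝ) :
    Tendsto (fun n => ∫ t, G (x n t, t) ∂μ) atTop (𝓝 (∫ t, G (y t, t) ∂μ)) := by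
  refine tendsto_of_subseq_tendsto fun ns hns => ?_
  obtain ⟨ms, -, hae⟩ := (hxy.comp hns).exists_seq_tendsto_ae
  refine ⟨ms, tendsto_integral_of_dominated_convergence (fun _ => ‖G‖)
    (fun k => (G.integrable_comp_graph (hx _)).aestronglyMeasurable)
    (integrable_const _) (fun k => .of_forall fun t => G.norm_coe_le_norm _) ?_⟩
  filter_upwards [hae] with t ht
  exact (G.continuous.tendsto _).comp (ht.prodMk_nhds tendsto_const_nhds)

variable [NormalSpace X] [BorelSpace X] [μ.WeaklyRegular]

lemma tendsto_integral_min_dist_of_forall_tendsto_integral {x : ℕ → X → E} {y : X → E}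
    (hx : ∀ n, Measurable (x n)) (hy : Measurable y)
    (h : ∀ G : E × X →ᵇ ℝ, Tendsto (fun n => ∫ t, G (x n t, t) ∂μ) atTop
      (𝓝 (∫ t, G (y t, t) ∂μ))) :
    Tendsto (fun n => ∫ t, min (dist (x n t) (y t)) 1 ∂μ) atTop (𝓝 0) := by
  refine tendsto_order.2 ⟨fun a ha => .of_forall fun n => ha.trans_le
    (integral_nonneg fun t => le_min dist_nonneg zero_le_one), fun ε hε => ?_⟩
  obtain ⟨g, hg_le, hg_small⟩ :=
    exists_boundedContinuous_min_dist_le_add (μ := μ) hy (half_pos hε)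
  filter_upwards [(h g).eventually (gt_mem_nhds hg_small)] with n hn
  calc ∫ t, min (dist (x n t) (y t)) 1 ∂μ
      ≤ ∫ t, (g (x n t, t) + g (y t, t)) ∂μ := integral_mono
        (integrable_min_one ((hx n).dist hy).aestronglyMeasurable fun _ => dist_nonneg)
        ((g.integrable_comp_graph (hx n)).add (g.integrable_comp_graph hy)) fun t => hg_le _ t
    _ = ∫ t, g (x n t, t) ∂μ + ∫ t, g (y t, t) ∂μ :=
        integral_add (g.integrable_comp_graph (hx n)) (g.integrable_comp_graph hy)
    _ < ε := by linarith

theorem forall_tendsto_integral_map_graph_iff {x : ℕ → X → E} {y : X → E}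
    (hx : ∀ n, Measurable (x n)) (hy : Measurable y) :
    (∀ G : E × X →ᵇ ℝ, Tendsto (fun n => ∫ p, G p ∂(μ.map fun t => (x n t, t))) atTop
        (𝓝 (∫ p, G p ∂(μ.map fun t => (y t, t))))) ↔
      Tendsto (fun n => ∫ t, min (dist (x n t) (y t)) 1 ∂μ) atTop (𝓝 0) := by
  simp only [integral_map_graph, hx, hy, BoundedContinuousFunction.continuous]
  refine ⟨tendsto_integral_min_dist_of_forall_tendsto_integral hx hy, fun h G => ?_⟩
  exact (tendstoInMeasure_of_tendsto_integral_min_dist hx hy h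
    ).tendsto_integral_boundedContinuousFunction hx G

end Graph

instance : IsFiniteMeasure expMeasure :=
  have hexp : IntegrableOn (fun t => Real.exp (-t)) (Set.Ici 0) := by
    rw [integrableOn_Ici_iff_integrableOn_Ioi]
    exact integrableOn_exp_neg_Ioi 0
  isFiniteMeasure_withDensity_ofReal hexp.hasFiniteIntegral

lemma integral_expMeasure (h : ℝ → ℝ) :
    ∫ t, h t ∂expMeasure = ∫ t in Set.Ici (0 : ℝ), h t * Real.exp (-t) := by
  rw [expMeasure, integral_withDensity_eq_integral_toReal_smul (by fun_prop)
    (.of_forall fun _ => ENNReal.ofReal_lt_top)]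
  simp only [ENNReal.toReal_ofReal (Real.exp_pos _).le, smul_eq_mul, mul_comm]

/-- Weak convergence of pseudo-path measures is equivalent to convergence in probability
(in measure) of the paths with respect to the exponential measure. -/
theorem stmt_1 {E : Type*} [MetricSpace E] [PolishSpace E] [MeasurableSpace E] [BorelSpace E]
    (x : ℕ → ℝ → E) (y : ℝ → E) (hx : ∀ n, Measurable (x n)) (hy : Measurable y) :
    (∀ f : BoundedContinuousFunction (E × ℝ) ℝ,
        Tendsto (fun n => ∫ p, f p ∂(pseudoPath (x n))) atTop
          (𝓝 (∫ p, f p ∂(pseudoPath y))))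
    ↔ Tendsto (fun n => ∫ t in Set.Ici (0 : ℝ),
        min (dist (x n t) (y t)) 1 * Real.exp (-t)) atTop (𝓝 0) := by
  simp only [← integral_expMeasure]
  exact forall_tendsto_integral_map_graph_iff hx hy
end

section
/- Let (E, d) be a Polish metric space, let F ⊆ E be a nonempty closed subset, and let ε > 0. Then there exists a Borel measurable map p : E → E such that p(z) ∈ F for every z ∈ E and d(z, p(z)) ≤ dist(z, F) + ε for every z ∈ E, where dist(z, F) = inf_{y ∈ F} d(z, y). -/
/-!
Enumerate a countable dense subset `{u n}` of `F`. For every `z` some `u n` lies within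
`dist(z, F) + ε` of `z`; sending `z` to the first such `u n` is measurable, because each set
`{z | dist z (u n) < dist(z, F) + ε}` is open.
-/

open Set Metric TopologicalSpace

theorem Metric.exists_mem_dist_lt_infDist_add {α : Type*} [PseudoMetricSpace α] {s t : Set α}
    (hst : s ⊆ closure t) (hs : s.Nonempty) {ε : ℝ} (hε : 0 < ε) (z : α) :
    ∃ y ∈ t, dist z y < infDist z s + ε := by
  have ht : t.Nonempty := closure_nonempty_iff.1 (hs.mono hst)
  refine (infDist_lt_iff ht).1 ?_
  calc infDist z t = infDist z (closure t) := infDist_closure.symm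
    _ ≤ infDist z s := infDist_le_infDist_of_subset hst hs
    _ < infDist z s + ε := lt_add_of_pos_right _ hε

theorem exists_measurable_selection_dist_lt {E : Type*} [PseudoMetricSpace E] [MeasurableSpace E]
    [OpensMeasurableSpace E] {u : ℕ → E} {g : E → ℝ} (hg : Measurable g)
    (h : ∀ z, ∃ n, dist z (u n) < g z) :
    ∃ p : E → E, Measurable p ∧ ∀ z, p z ∈ range u ∧ dist z (p z) < g z := by
  classical
  refine ⟨fun z => u (Nat.find (h z)), ?_, fun z => ⟨mem_range_self _, Nat.find_spec (h z)⟩⟩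
  exact Measurable.find (f := fun n _ => u n) (fun _ => measurable_const)
    (fun n => measurableSet_lt (continuous_id.dist continuous_const).measurable hg) h

theorem stmt_3_general {E : Type*} [MetricSpace E] [PolishSpace E] [MeasurableSpace E] [BorelSpace E]
    (F : Set E) (hFne : F.Nonempty) (ε : ℝ) (hε : 0 < ε) :
    ∃ p : E → E, Measurable p ∧ (∀ z, p z ∈ F) ∧
      ∀ z, dist z (p z) ≤ Metric.infDist z F + ε := by
  obtain ⟨t, htF, htc, hFt⟩ := (IsSeparable.of_separableSpace F).exists_countable_dense_subset
  obtain ⟨u, rfl⟩ := htc.exists_eq_range (closure_nonempty_iff.1 (hFne.mono hFt))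
  have hnear : ∀ z, ∃ n, dist z (u n) < infDist z F + ε := fun z => by
    obtain ⟨_, ⟨n, rfl⟩, hn⟩ := exists_mem_dist_lt_infDist_add hFt hFne hε z
    exact ⟨n, hn⟩
  obtain ⟨p, hp, hpu⟩ := exists_measurable_selection_dist_lt
    ((continuous_infDist_pt F).measurable.add_const ε) hnear
  exact ⟨p, hp, fun z => htF (hpu z).1, fun z => (hpu z).2.le⟩

/-- Measurable `ε`-projector onto a nonempty closed subset of a Polish space. -/
theorem stmt_3 {E : Type*} [MetricSpace E] [PolishSpace E] [MeasurableSpace E] [BorelSpace E]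
    (F : Set E) (hF : IsClosed F) (hFne : F.Nonempty) (ε : ℝ) (hε : 0 < ε) :
    ∃ p : E → E, Measurable p ∧ (∀ z, p z ∈ F) ∧
      ∀ z, dist z (p z) ≤ Metric.infDist z F + ε :=
  stmt_3_general F hFne ε hε
end

section
/- The integral ∫_0^∞ min(1, t) · (π²/16) · (∑_{k ∈ ℤ} k² · exp(−t π² k² / 8)) dt is finite. Consequently the positive measure μ(dt) with density (π²/16) ∑_{k ∈ ℤ} k² e^{−t π² k²/8} on (0,∞) is the Levy measure of a subordinator. -/
/-!
Since `min 1 t ≤ t`, it suffices that `θ(t) = ∑ₖ k² e^{-a k² t}`, `a = π²/8`, has a finite first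
moment on `(0, ∞)`. By Tonelli, `∫ t θ(t) dt = ∑ₖ k² ∫ t e^{-a k² t} dt = ∑_{k ≠ 0} 1/(a² k²)`,
a convergent series.
-/

open MeasureTheory Real Set Filter
open scoped ENNReal

theorem AEMeasurable.tsum_of_ae_summable {α ι E : Type*} [MeasurableSpace α] [Countable ι]
    [TopologicalSpace E] [AddCommMonoid E] [ContinuousAdd E]
    [TopologicalSpace.PseudoMetrizableSpace E] [SecondCountableTopology E]
    [MeasurableSpace E] [BorelSpace E] {μ : Measure α} {f : ι → α → E}
    (hf : ∀ i, AEMeasurable (f i) μ) (hsum : ∀ᵐ x ∂μ, Summable fun i => f i x) :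
    AEMeasurable (fun x => ∑' i, f i x) μ :=
  aemeasurable_of_tendsto_metrizable_ae atTop
    (fun s => Finset.aemeasurable_fun_sum s fun i _ => hf i) (hsum.mono fun _ hx => hx.hasSum)

lemma summable_sq_mul_exp_neg_mul_sq_nat {a : ℝ} (ha : 0 < a) :
    Summable fun n : ℕ => (n : ℝ) ^ 2 * exp (-(a * n ^ 2)) := by
  refine (summable_pow_mul_exp_neg_nat_mul 2 ha).of_nonneg_of_le (fun n => by positivity)
    fun n => mul_le_mul_of_nonneg_left (exp_le_exp.mpr ?_) (by positivity)
  have : (n : ℝ) ≤ (n : ℝ) ^ 2 := by exact_mod_cast Nat.le_self_pow two_ne_zero n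
  nlinarith

lemma summable_sq_mul_exp_neg_mul_sq_int {a : ℝ} (ha : 0 < a) :
    Summable fun k : ℤ => (k : ℝ) ^ 2 * exp (-(a * k ^ 2)) :=
  .of_nat_of_neg (by simpa using summable_sq_mul_exp_neg_mul_sq_nat ha)
    (by simpa using summable_sq_mul_exp_neg_mul_sq_nat ha)

lemma lintegral_mul_exp_neg_mul_Ioi {r : ℝ} (hr : 0 < r) :
    ∫⁻ t in Ioi 0, ENNReal.ofReal (t * exp (-(r * t))) = ENNReal.ofReal (1 / r ^ 2) := by
  have hgamma := integral_rpow_mul_exp_neg_mul_Ioi two_pos hr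
  norm_num [Real.Gamma_two] at hgamma
  have hint : IntegrableOn (fun t => t * exp (-(r * t))) (Ioi 0) := by
    simpa using integrableOn_rpow_mul_exp_neg_mul_rpow (s := 1) (p := 1) (by norm_num) one_pos hr
  rw [← ofReal_integral_eq_lintegral_ofReal hint, hgamma, one_div]
  filter_upwards [ae_restrict_mem measurableSet_Ioi] with t (ht : 0 < t)
  positivity

lemma lintegral_mul_sq_mul_exp_neg_mul_sq_mul_Ioi {a : ℝ} (ha : 0 < a) (k : ℤ) :
    ∫⁻ t in Ioi 0, ENNReal.ofReal (t * ((k : ℝ) ^ 2 * exp (-(a * k ^ 2 * t))))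
      = ENNReal.ofReal (1 / (a ^ 2 * k ^ 2)) := by
  -- for `k = 0` both sides vanish, the right one because `1 / 0 = 0`
  rcases eq_or_ne k 0 with rfl | hk
  · simp
  have hk2 : (0 : ℝ) < (k : ℝ) ^ 2 := by positivity
  simp_rw [mul_left_comm _ ((k : ℝ) ^ 2), ENNReal.ofReal_mul hk2.le]
  rw [lintegral_const_mul' _ _ ENNReal.ofReal_ne_top,
    lintegral_mul_exp_neg_mul_Ioi (by positivity), ← ENNReal.ofReal_mul hk2.le]
  congr 1
  field_simp

lemma lintegral_mul_tsum_sq_mul_exp_neg_mul_sq_mul_Ioi {a : ℝ} (ha : 0 < a) :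
    ∫⁻ t in Ioi 0, ENNReal.ofReal (t * ∑' k : ℤ, (k : ℝ) ^ 2 * exp (-(a * k ^ 2 * t)))
      = ∑' k : ℤ, ENNReal.ofReal (1 / (a ^ 2 * k ^ 2)) := by
  calc ∫⁻ t in Ioi 0, ENNReal.ofReal (t * ∑' k : ℤ, (k : ℝ) ^ 2 * exp (-(a * k ^ 2 * t)))
      = ∫⁻ t in Ioi 0, ∑' k : ℤ,
          ENNReal.ofReal (t * ((k : ℝ) ^ 2 * exp (-(a * k ^ 2 * t)))) := by
        refine setLIntegral_congr_fun measurableSet_Ioi fun t (ht : 0 < t) => ?_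
        have hsum := (summable_sq_mul_exp_neg_mul_sq_int (mul_pos ha ht)).mul_left t
        rw [← tsum_mul_left, ENNReal.ofReal_tsum_of_nonneg (fun k => by positivity)]
        simpa [mul_right_comm a] using hsum
    _ = ∑' k : ℤ, ENNReal.ofReal (1 / (a ^ 2 * k ^ 2)) := by
        rw [lintegral_tsum fun k => by fun_prop]
        exact tsum_congr (lintegral_mul_sq_mul_exp_neg_mul_sq_mul_Ioi ha)

lemma lintegral_ofReal_min_one_mul_le_Ioi (g : ℝ → ℝ) :
    ∫⁻ t in Ioi 0, ENNReal.ofReal (min 1 t * g t) ≤ ∫⁻ t in Ioi 0, ENNReal.ofReal (t * g t) := by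
  refine setLIntegral_mono_ae' measurableSet_Ioi (.of_forall fun t (ht : 0 < t) => ?_)
  rcases le_or_gt 0 (g t) with hg | hg
  · exact ENNReal.ofReal_le_ofReal (mul_le_mul_of_nonneg_right (min_le_right 1 t) hg)
  · rw [ENNReal.ofReal_of_nonpos (mul_nonpos_of_nonneg_of_nonpos (by positivity) hg.le)]
    exact zero_le

lemma integrableOn_min_one_mul_of_lintegral_mul_lt_top {g : ℝ → ℝ}
    (hmeas : AEMeasurable g (volume.restrict (Ioi 0)))
    (hfin : ∫⁻ t in Ioi 0, ENNReal.ofReal (t * g t) < ⊤) (hg : ∀ t ∈ Ioi 0, 0 ≤ g t) :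
    IntegrableOn (fun t => min 1 t * g t) (Ioi 0) := by
  refine ⟨((measurable_const.min measurable_id).aemeasurable.mul hmeas).aestronglyMeasurable,
    (hasFiniteIntegral_iff_ofReal ?_).mpr ((lintegral_ofReal_min_one_mul_le_Ioi g).trans_lt hfin)⟩
  filter_upwards [ae_restrict_mem measurableSet_Ioi] with t (ht : 0 < t)
  exact mul_nonneg (by positivity) (hg t ht)

lemma lintegral_min_one_withDensity_lt_top_of_lintegral_mul_lt_top {g : ℝ → ℝ}
    (hmeas : AEMeasurable g (volume.restrict (Ioi 0)))
    (hfin : ∫⁻ t in Ioi 0, ENNReal.ofReal (t * g t) < ⊤) :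
    ∫⁻ t, ENNReal.ofReal (min 1 t)
      ∂((volume.restrict (Ioi 0)).withDensity fun t => ENNReal.ofReal (g t)) < ⊤ := by
  rw [lintegral_withDensity_eq_lintegral_mul₀ hmeas.ennreal_ofReal (by fun_prop)]
  refine lt_of_eq_of_lt (setLIntegral_congr_fun measurableSet_Ioi fun t (ht : 0 < t) => ?_)
    ((lintegral_ofReal_min_one_mul_le_Ioi g).trans_lt hfin)
  rw [Pi.mul_apply, mul_comm, ← ENNReal.ofReal_mul (by positivity)]

/-- The measure `μ(dt) = (π²/16) ∑_{k∈ℤ} k² e^{−tπ²k²/8} dt` on `(0,∞)` integrates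
`min(1,t)`, i.e. it is the Levy measure of a subordinator. -/
theorem stmt_8 :
    IntegrableOn
      (fun t : ℝ => min 1 t *
        (Real.pi ^ 2 / 16 * ∑' k : ℤ, (k : ℝ) ^ 2 * Real.exp (-t * Real.pi ^ 2 * (k : ℝ) ^ 2 / 8)))
      (Set.Ioi (0 : ℝ)) ∧
    ∫⁻ t, ENNReal.ofReal (min 1 t)
        ∂((volume.restrict (Set.Ioi (0 : ℝ))).withDensity fun t =>
          ENNReal.ofReal (Real.pi ^ 2 / 16 *
            ∑' k : ℤ, (k : ℝ) ^ 2 * Real.exp (-t * Real.pi ^ 2 * (k : ℝ) ^ 2 / 8))) < ⊤ := by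
  set a : ℝ := π ^ 2 / 8
  have ha : 0 < a := by positivity
  have hexp (t : ℝ) (k : ℤ) : -t * π ^ 2 * (k : ℝ) ^ 2 / 8 = -(a * k ^ 2 * t) := by ring
  simp only [hexp]
  have hmeas : AEMeasurable (fun t => π ^ 2 / 16 * ∑' k : ℤ, (k : ℝ) ^ 2 * exp (-(a * k ^ 2 * t)))
      (volume.restrict (Ioi 0)) := by
    refine (AEMeasurable.tsum_of_ae_summable (fun k => by fun_prop) ?_).const_mul _
    filter_upwards [ae_restrict_mem measurableSet_Ioi] with t (ht : 0 < t)
    simpa [mul_right_comm a] using summable_sq_mul_exp_neg_mul_sq_int (mul_pos ha ht)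
  have hfin : ∫⁻ t in Ioi 0, ENNReal.ofReal
      (t * (π ^ 2 / 16 * ∑' k : ℤ, (k : ℝ) ^ 2 * exp (-(a * k ^ 2 * t)))) < ⊤ := by
    have hsum : Summable fun k : ℤ => 1 / (a ^ 2 * k ^ 2) := by
      simpa [mul_comm] using (summable_one_div_int_pow.mpr one_lt_two).mul_right (a ^ 2)⁻¹
    simp_rw [mul_left_comm _ (π ^ 2 / 16), ENNReal.ofReal_mul (by positivity : 0 ≤ π ^ 2 / 16)]
    rw [lintegral_const_mul' _ _ ENNReal.ofReal_ne_top,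
      lintegral_mul_tsum_sq_mul_exp_neg_mul_sq_mul_Ioi ha,
      ← ENNReal.ofReal_tsum_of_nonneg (fun k => by positivity) hsum]
    exact ENNReal.mul_lt_top ENNReal.ofReal_lt_top ENNReal.ofReal_lt_top
  exact ⟨integrableOn_min_one_mul_of_lintegral_mul_lt_top hmeas hfin fun t _ => by positivity,
    lintegral_min_one_withDensity_lt_top_of_lintegral_mul_lt_top hmeas hfin⟩
end

section
/- For every t > 0, one has ∑_{k ∈ ℤ} (−1)^k · k² · exp(−t π² k² / 8) ≤ 0. Equivalently, the measure ν(dt) on (0,∞) with density −(π²/16) ∑_{k ∈ ℤ} (−1)^k k² e^{−t π² k²/8} with respect to Lebesgue measure is a positive measure. -/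
/-!
Write `θ(y) = ∑ₙ (-1)ⁿ e^{-π n² y}` (Mathlib's `cosKernel (1/2)`), so that the sum in question,
at `y = tπ/8`, is `-θ'(y)/π`. For `π y ≥ 1` the terms `n² e^{-π n² y}` decrease for `n ≥ 1` and
the alternating series bound applies. For smaller `y`, Jacobi's transformation
`θ(y) = y^{-1/2} ∑ₙ e^{-π (n + 1/2)² / y}` exhibits `θ` as a sum of functions of `y` that are
increasing on `(0, π/2]`, since `√x e^{-bx}` decreases for `x ≥ 1/(2b)`; so `θ' ≥ 0` there.
-/

open Real Set Filter Topology HurwitzZeta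

lemma antitoneOn_mul_exp_neg_mul {c : ℝ} (hc : 0 < c) :
    AntitoneOn (fun x => x * exp (-(c * x))) (Ici c⁻¹) := by
  intro x hx y hy hxy
  have hx0 : 0 < x := (inv_pos.2 hc).trans_le hx
  have hcx : 1 ≤ c * x := by rwa [mem_Ici, inv_le_iff_one_le_mul₀' hc] at hx
  have hy_le : y ≤ x * exp (c * (y - x)) := calc
    y ≤ x * (c * (y - x) + 1) := by nlinarith
    _ ≤ x * exp (c * (y - x)) := by gcongr; exact add_one_le_exp _
  calc y * exp (-(c * y)) ≤ x * exp (c * (y - x)) * exp (-(c * y)) := by gcongr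
    _ = x * exp (-(c * x)) := by rw [mul_assoc, ← exp_add]; ring_nf

lemma antitoneOn_sqrt_mul_exp_neg_mul {b : ℝ} (hb : 0 < b) :
    AntitoneOn (fun x => √x * exp (-(b * x))) (Ici (2 * b)⁻¹) := by
  intro x hx y hy hxy
  have hsq : ∀ z : ℝ, 0 ≤ z → √z * exp (-(b * z)) = √(z * exp (-(2 * b * z))) := fun z hz => by
    rw [sqrt_mul hz, ← exp_half]; ring_nf
  have hpos : 0 < (2 * b)⁻¹ := by positivity
  dsimp only
  rw [hsq x (hpos.le.trans hx), hsq y (hpos.le.trans hy)]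
  exact sqrt_le_sqrt (antitoneOn_mul_exp_neg_mul (by positivity) hx hy hxy)

lemma accPt_Ioo_of_mem {y a b : ℝ} (h : y ∈ Ioo a b) : AccPt y (𝓟 (Ioo a b)) := by
  rw [accPt_iff_frequently]
  exact ((frequently_gt_nhds y).and_eventually (isOpen_Ioo.mem_nhds h)).mono
    fun z hz => ⟨hz.1.ne', hz.2⟩

lemma mul_exp_neg_mul_le (x : ℝ) {s : ℝ} (hs : 0 < s) :
    x * exp (-(x * s)) ≤ 2 / s * exp (-(x * (s / 2))) := by
  have hx : x * s / 2 ≤ exp (x * s / 2) := by linarith [add_one_le_exp (x * s / 2)]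
  calc x * exp (-(x * s)) = 2 / s * (x * s / 2) * exp (-(x * s)) := by field_simp
    _ ≤ 2 / s * exp (x * s / 2) * exp (-(x * s)) := by gcongr
    _ = 2 / s * exp (-(x * (s / 2))) := by rw [mul_assoc, ← exp_add]; ring_nf

lemma summable_mul_exp_neg_mul {ι : Type*} {b : ι → ℝ} (hb : ∀ n, 0 ≤ b n)
    (hsum : ∀ s > 0, Summable fun n => exp (-(b n * s))) {s : ℝ} (hs : 0 < s) :
    Summable fun n => b n * exp (-(b n * s)) :=
  .of_nonneg_of_le (fun n => by have := hb n; positivity) (fun n => mul_exp_neg_mul_le _ hs)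
    ((hsum _ (half_pos hs)).mul_left _)

lemma hasDerivAt_tsum_mul_exp_neg_mul {ι : Type*} {w b : ι → ℝ} {C : ℝ} (hw : ∀ n, |w n| ≤ C)
    (hb : ∀ n, 0 ≤ b n) (hsum : ∀ s > 0, Summable fun n => exp (-(b n * s))) {u : ℝ}
    (hu : 0 < u) :
    HasDerivAt (fun v => ∑' n, w n * exp (-(b n * v)))
      (∑' n, -(w n * b n * exp (-(b n * u)))) u := by
  refine hasDerivAt_tsum_of_isPreconnected (t := Ioi (u / 2))
    (g := fun n v => w n * exp (-(b n * v))) (g' := fun n v => -(w n * b n * exp (-(b n * v))))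
    (u := fun n => C * (b n * exp (-(b n * (u / 2)))))
    ((summable_mul_exp_neg_mul hb hsum (half_pos hu)).mul_left C) isOpen_Ioi isPreconnected_Ioi
    (fun n v _ => ?_) (fun n v hv => ?_) (half_lt_self hu) ?_ (half_lt_self hu)
  · simpa [mul_comm, mul_assoc, mul_left_comm] using
      (((hasDerivAt_id v).const_mul (b n)).neg.exp).const_mul (w n)
  · have hbn := hb n
    rw [norm_neg, norm_mul, norm_mul, norm_of_nonneg hbn, norm_of_nonneg (exp_pos _).le,
      Real.norm_eq_abs, mul_assoc]
    gcongr
    · exact (abs_nonneg _).trans (hw n)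
    · exact hw n
    · exact le_of_lt hv
  · refine .of_norm_bounded ((hsum u hu).mul_left C) fun n => ?_
    rw [norm_mul, norm_of_nonneg (exp_pos _).le, Real.norm_eq_abs]
    gcongr
    exact hw n

lemma summable_exp_neg_pi_mul_sq_mul {s : ℝ} (hs : 0 < s) :
    Summable fun n : ℤ => exp (-(π * n ^ 2 * s)) := by
  simpa [neg_mul] using (hasSum_int_evenKernel 0 hs).summable

lemma hasSum_int_neg_one_zpow_mul_exp {y : ℝ} (hy : 0 < y) :
    HasSum (fun n : ℤ => (-1 : ℝ) ^ n * exp (-(π * n ^ 2 * y)))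
      (cosKernel ((1 / 2 : ℝ) : UnitAddCircle) y) := by
  rw [← Complex.hasSum_ofReal]
  convert hasSum_int_cosKernel (1 / 2) hy using 2 with n
  rw [show 2 * π * Complex.I * ((1 / 2 : ℝ) : ℂ) * n = n * (π * Complex.I) by push_cast; ring,
    Complex.exp_int_mul, Complex.exp_pi_mul_I]
  push_cast
  ring_nf

lemma hasSum_int_cosKernel_half_dual {y : ℝ} (hy : 0 < y) :
    HasSum (fun n : ℤ => √y⁻¹ * exp (-(π * (n + 1 / 2) ^ 2 * y⁻¹)))
      (cosKernel ((1 / 2 : ℝ) : UnitAddCircle) y) := by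
  have h := (hasSum_int_evenKernel (1 / 2) (inv_pos.2 hy)).mul_left √y⁻¹
  rw [evenKernel_functional_equation, one_div y⁻¹, inv_inv, ← sqrt_eq_rpow, ← mul_assoc,
    mul_one_div_cancel (by positivity), one_mul] at h
  simpa only [neg_mul] using h

lemma monotoneOn_cosKernel_half :
    MonotoneOn (cosKernel ((1 / 2 : ℝ) : UnitAddCircle)) (Ioc 0 (π / 2)) := by
  intro y hy z hz hyz
  refine hasSum_le (fun n => ?_) (hasSum_int_cosKernel_half_dual hy.1)
    (hasSum_int_cosKernel_half_dual hz.1)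
  have hb : π / 4 ≤ π * (n + 1 / 2 : ℝ) ^ 2 := by
    have : (1 : ℝ) ≤ (2 * n + 1) ^ 2 := by
      have : (1 : ℤ) ≤ (2 * n + 1) ^ 2 := by rcases le_or_gt 0 n with h | h <;> nlinarith
      exact_mod_cast this
    nlinarith [pi_pos]
  refine antitoneOn_sqrt_mul_exp_neg_mul (by linarith [pi_pos]) ?_ ?_ (inv_anti₀ hy.1 hyz)
  all_goals
    rw [mem_Ici]
    gcongr <;> linarith [hy.1, hz.1, hy.2, hz.2]

lemma tsum_neg_one_zpow_mul_sq_mul_exp_nonpos_of_lt {y : ℝ} (hy : 0 < y) (hy' : y < π / 2) :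
    ∑' n : ℤ, (-1 : ℝ) ^ n * n ^ 2 * exp (-(π * n ^ 2 * y)) ≤ 0 := by
  have hderiv : HasDerivAt (cosKernel ((1 / 2 : ℝ) : UnitAddCircle))
      (∑' n : ℤ, -((-1 : ℝ) ^ n * (π * n ^ 2) * exp (-(π * n ^ 2 * y)))) y := by
    refine (hasDerivAt_tsum_mul_exp_neg_mul (C := 1) (fun n => (abs_neg_one_zpow n).le)
      (fun n => by positivity) (fun s hs => ?_) hy).congr_of_eventuallyEq ?_
    · simpa only [mul_assoc] using summable_exp_neg_pi_mul_sq_mul hs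
    · filter_upwards [Ioi_mem_nhds hy] with v hv
      simpa only [mul_assoc] using (hasSum_int_neg_one_zpow_mul_exp hv).tsum_eq.symm
  have hmono := hderiv.hasDerivWithinAt.nonneg_of_monotoneOn (accPt_Ioo_of_mem ⟨hy, hy'⟩)
    (monotoneOn_cosKernel_half.mono Ioo_subset_Ioc_self)
  have hderiv_eq : ∑' n : ℤ, -((-1 : ℝ) ^ n * (π * n ^ 2) * exp (-(π * n ^ 2 * y)))
      = -(π * ∑' n : ℤ, (-1 : ℝ) ^ n * n ^ 2 * exp (-(π * n ^ 2 * y))) := by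
    rw [tsum_neg, ← tsum_mul_left]
    exact congrArg _ (tsum_congr fun n => by ring)
  rw [hderiv_eq, neg_nonneg] at hmono
  exact nonpos_of_mul_nonpos_right hmono pi_pos

lemma tsum_neg_one_zpow_mul_sq_mul_exp_nonpos_of_le {y : ℝ} (hy : 1 ≤ π * y) :
    ∑' n : ℤ, (-1 : ℝ) ^ n * n ^ 2 * exp (-(π * n ^ 2 * y)) ≤ 0 := by
  have hy0 : 0 < y := pos_of_mul_pos_right (by linarith) pi_pos.le
  set f : ℤ → ℝ := fun n => (-1 : ℝ) ^ n * n ^ 2 * exp (-(π * n ^ 2 * y))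
  set g : ℕ → ℝ := fun i => ((i : ℝ) + 1) ^ 2 * exp (-(π * y * ((i : ℝ) + 1) ^ 2))
  have hf : Summable f := by
    refine .of_norm_bounded (summable_mul_exp_neg_mul (b := fun n : ℤ => π * n ^ 2)
      (fun n => by positivity) (fun s hs => ?_) hy0) fun n => ?_
    · simpa only [mul_assoc] using summable_exp_neg_pi_mul_sq_mul hs
    · simp only [f, norm_mul, norm_zpow, norm_neg, norm_one, one_zpow, one_mul, norm_pow,
        Real.norm_eq_abs, sq_abs, abs_exp]
      gcongr
      exact le_mul_of_one_le_left (by positivity) (by linarith [pi_gt_three])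
  have hf_succ (i : ℕ) : f (i + 1) = -((-1) ^ i * g i) := by
    simp only [f, g, zpow_add_one₀ (by norm_num : (-1 : ℝ) ≠ 0), zpow_natCast]
    push_cast
    ring_nf
  have hf_neg (i : ℕ) : f (-(i + 1)) = f (i + 1) := by
    simp only [f, zpow_neg, ← inv_zpow, inv_neg, inv_one, Int.cast_neg, neg_sq]
  have hmem (i : ℕ) : ((i : ℝ) + 1) ^ 2 ∈ Ici (π * y)⁻¹ :=
    (inv_le_one_of_one_le₀ hy).trans (one_le_pow₀ (by linarith [i.cast_nonneg (α := ℝ)]))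
  have hg_anti : Antitone g := fun i j hij =>
    antitoneOn_mul_exp_neg_mul (by positivity) (hmem i) (hmem j) (by gcongr)
  have hg : Summable fun i => (-1) ^ i * g i := by
    simpa [hf_succ] using (hf.comp_injective (add_left_injective 1 |>.comp Nat.cast_injective)).neg
  have hl : 0 ≤ ∑' i, (-1) ^ i * g i := by
    simpa using hg_anti.alternating_series_le_tendsto hg.hasSum.tendsto_sum_nat 0
  have hsum : HasSum (fun i : ℕ => f (i + 1)) (-∑' i, (-1) ^ i * g i) := by
    simpa only [hf_succ] using hg.hasSum.neg
  have hf_sum := HasSum.of_add_one_of_neg_add_one hsum (by simpa only [hf_neg] using hsum)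
  have hf0 : f 0 = 0 := by simp [f]
  rw [hf_sum.tsum_eq, hf0]
  linarith

theorem tsum_neg_one_zpow_mul_sq_mul_exp_nonpos {y : ℝ} (hy : 0 < y) :
    ∑' n : ℤ, (-1 : ℝ) ^ n * n ^ 2 * exp (-(π * n ^ 2 * y)) ≤ 0 := by
  rcases le_or_gt 1 (π * y) with h | h
  · exact tsum_neg_one_zpow_mul_sq_mul_exp_nonpos_of_le h
  · refine tsum_neg_one_zpow_mul_sq_mul_exp_nonpos_of_lt hy ?_
    nlinarith [pi_gt_three]

/-- For every `t > 0`, `∑_{k∈ℤ} (−1)^k k² e^{−tπ²k²/8} ≤ 0`; equivalently the density of the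
measure `ν` is nonnegative. -/
theorem stmt_9 (t : ℝ) (ht : 0 < t) :
    ∑' k : ℤ, (-1 : ℝ) ^ k * (k : ℝ) ^ 2 * Real.exp (-t * Real.pi ^ 2 * (k : ℝ) ^ 2 / 8) ≤ 0 := by
  refine le_of_eq_of_le (tsum_congr fun k => ?_)
    (tsum_neg_one_zpow_mul_sq_mul_exp_nonpos (y := t * π / 8) (by positivity))
  ring_nf
end

section
/- The total mass of the measure ν equals 1/2: one has ∫_0^∞ (−(π²/16)) · (∑_{k ∈ ℤ} (−1)^k · k² · exp(−t π² k² / 8)) dt = 1/2. -/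
/-!
Substituting `a = π t / 8` turns the integrand into `(π / 16) θ'(a)` for the alternating theta
function `θ(a) = ∑ (-1)^k exp(-π a k²)`, so the claim is `∫₀^∞ θ' = θ(∞) - θ(0⁺) = 1 - 0`.
The limit at `∞` is dominated convergence. Near `0` we use Jacobi's transformation
`θ(a) = a^{-1/2} ∑ exp(-π (n - 1/2)² / a)`: every summand tends to `0` and is increasing on
`(0, 1]`, so `θ(0⁺) = 0` and `θ' ≥ 0` there, which makes `θ'` integrable on `(0, 1]`.
On `(1, ∞)`, `|θ'|` is dominated by `-Φ'` for the decreasing `Φ(a) = ∑ exp(-π a k²)`.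
-/

open MeasureTheory Real Set Filter Topology

lemma summable_abs_pow_mul_exp_neg_mul_sub_sq {b : ℝ} (hb : 0 < b) (c : ℝ) (m : ℕ) :
    Summable fun n : ℤ => |(n : ℝ)| ^ m * exp (-b * (n - c) ^ 2) := by
  refine (summable_pow_mul_jacobiTheta₂_term_bound (b * |c| / π) (T := b / π)
    (by positivity) m).of_nonneg_of_le (fun n => by positivity) fun n => ?_
  rw [Int.cast_abs]
  refine mul_le_mul_of_nonneg_left (exp_le_exp.mpr ?_) (by positivity)
  have hcn : c * n ≤ |c| * |(n : ℝ)| := by rw [← abs_mul]; exact le_abs_self _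
  have : -π * (b / π * n ^ 2 - 2 * (b * |c| / π) * |(n : ℝ)|) =
      -b * n ^ 2 + 2 * b * (|c| * |(n : ℝ)|) := by
    field_simp; ring
  rw [this]
  nlinarith [sq_nonneg c]

noncomputable def thetaSeries (ε : ℤ → ℝ) (a : ℝ) : ℝ := ∑' k : ℤ, ε k * exp (-π * a * k ^ 2)

lemma summable_exp_neg_mul_sq {b : ℝ} (hb : 0 < b) :
    Summable fun k : ℤ => exp (-b * k ^ 2) := by
  simpa using summable_abs_pow_mul_exp_neg_mul_sub_sq hb 0 0

lemma summable_sq_mul_exp_neg_mul_sq {b : ℝ} (hb : 0 < b) :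
    Summable fun k : ℤ => (k : ℝ) ^ 2 * exp (-b * k ^ 2) := by
  simpa using summable_abs_pow_mul_exp_neg_mul_sub_sq hb 0 2

namespace thetaSeries

variable {ε : ℤ → ℝ}

lemma summable_term (hε : ∀ k, |ε k| ≤ 1) {a : ℝ} (ha : 0 < a) :
    Summable fun k : ℤ => ε k * exp (-π * a * k ^ 2) := by
  refine (summable_exp_neg_mul_sq (mul_pos pi_pos ha)).of_norm_bounded fun k => ?_
  rw [norm_mul, norm_of_nonneg (exp_pos _).le, neg_mul]
  exact mul_le_of_le_one_left (exp_pos _).le (hε k)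

lemma norm_deriv_term_le (hε : ∀ k, |ε k| ≤ 1) (k : ℤ) (y : ℝ) :
    ‖-π * k ^ 2 * ε k * exp (-π * y * k ^ 2)‖ ≤ π * ((k : ℝ) ^ 2 * exp (-π * y * k ^ 2)) := by
  rw [norm_mul, norm_mul, norm_mul, norm_neg, norm_of_nonneg pi_pos.le,
    norm_of_nonneg (sq_nonneg _), norm_of_nonneg (exp_pos _).le, mul_assoc, mul_assoc]
  gcongr
  exact mul_le_of_le_one_left (exp_pos _).le (hε k)

lemma hasDerivAt (hε : ∀ k, |ε k| ≤ 1) {a : ℝ} (ha : 0 < a) :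
    HasDerivAt (thetaSeries ε) (thetaSeries (fun k => -π * k ^ 2 * ε k) a) a := by
  have hterm (k : ℤ) (y : ℝ) : HasDerivAt (fun y => ε k * exp (-π * y * k ^ 2))
      (-π * k ^ 2 * ε k * exp (-π * y * k ^ 2)) y := by
    have := (((hasDerivAt_id y).const_mul (-π)).mul_const ((k : ℝ) ^ 2)).exp.const_mul (ε k)
    exact this.congr_deriv (by simp only [id]; ring)
  have hbound (k : ℤ) (y : ℝ) (hy : y ∈ Ioi (a / 2)) :
      ‖-π * k ^ 2 * ε k * exp (-π * y * k ^ 2)‖ ≤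
        π * ((k : ℝ) ^ 2 * exp (-(π * (a / 2)) * k ^ 2)) := by
    refine (norm_deriv_term_le hε k y).trans ?_
    gcongr
    nlinarith [pi_pos, hy.out]
  exact hasDerivAt_tsum_of_isPreconnected
    ((summable_sq_mul_exp_neg_mul_sq (by positivity)).mul_left π) isOpen_Ioi
    isPreconnected_Ioi (fun k y _ => hterm k y) hbound (half_lt_self ha)
    (summable_term hε ha) (half_lt_self ha)

lemma tendsto_atTop (hε : ∀ k, |ε k| ≤ 1) :
    Tendsto (thetaSeries ε) atTop (𝓝 (ε 0)) := by
  have hlim (k : ℤ) : Tendsto (fun a => ε k * exp (-π * a * k ^ 2)) atTop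
      (𝓝 (if k = 0 then ε 0 else 0)) := by
    rcases eq_or_ne k 0 with rfl | hk
    · simp
    · have hk2 : 0 < π * (k : ℝ) ^ 2 := by positivity
      have := (tendsto_exp_atBot.comp
        (tendsto_id.const_mul_atTop_of_neg (neg_neg_of_pos hk2))).const_mul (ε k)
      simpa [if_neg hk, neg_mul, mul_comm, mul_left_comm, mul_assoc] using this
  have := tendsto_tsum_of_dominated_convergence (summable_exp_neg_mul_sq pi_pos) hlim
    (eventually_ge_atTop 1 |>.mono fun a ha k => ?_)
  · rwa [tsum_ite_eq] at this
  rw [norm_mul, norm_of_nonneg (exp_pos _).le]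
  refine (mul_le_of_le_one_left (exp_pos _).le (hε k)).trans (exp_le_exp.mpr ?_)
  nlinarith [pi_pos, sq_nonneg (k : ℝ), mul_nonneg pi_pos.le (sq_nonneg (k : ℝ))]

lemma abs_deriv_le (hε : ∀ k, |ε k| ≤ 1) {a : ℝ} (ha : 0 < a) :
    |thetaSeries (fun k => -π * k ^ 2 * ε k) a| ≤ -thetaSeries (fun k => -π * k ^ 2 * 1) a := by
  have hsum : Summable fun k : ℤ => π * ((k : ℝ) ^ 2 * exp (-π * a * k ^ 2)) :=
    (summable_sq_mul_exp_neg_mul_sq (mul_pos pi_pos ha)).mul_left π |>.congr fun k => by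
      simp only [neg_mul]
  calc |thetaSeries (fun k => -π * k ^ 2 * ε k) a|
      ≤ ∑' k : ℤ, ‖-π * k ^ 2 * ε k * exp (-π * a * k ^ 2)‖ :=
        norm_tsum_le_tsum_norm (hsum.of_nonneg_of_le (fun _ => norm_nonneg _)
          (norm_deriv_term_le hε · a))
    _ ≤ ∑' k : ℤ, π * ((k : ℝ) ^ 2 * exp (-π * a * k ^ 2)) :=
        Summable.tsum_le_tsum (norm_deriv_term_le hε · a)
          (hsum.of_nonneg_of_le (fun _ => norm_nonneg _) (norm_deriv_term_le hε · a)) hsum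
    _ = -thetaSeries (fun k => -π * k ^ 2 * 1) a := by
        rw [thetaSeries, ← tsum_neg]
        congr 1 with k
        ring

lemma integrableOn_Ioi_deriv (hε : ∀ k, |ε k| ≤ 1) {b : ℝ} (hb : 0 < b) :
    IntegrableOn (thetaSeries fun k => -π * k ^ 2 * ε k) (Ioi b) := by
  have hone : ∀ k : ℤ, |(fun _ => (1 : ℝ)) k| ≤ 1 := fun _ => by simp
  have hderiv (a : ℝ) (ha : a ∈ Ioi b) := hasDerivAt hone (hb.trans ha)
  have hnonpos (a : ℝ) (_ : a ∈ Ioi b) : thetaSeries (fun k => -π * k ^ 2 * 1) a ≤ 0 :=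
    tsum_nonpos fun k => mul_nonpos_of_nonpos_of_nonneg (by nlinarith [pi_pos, sq_nonneg (k : ℝ)])
      (exp_pos _).le
  have hmajorant := integrableOn_Ioi_deriv_of_nonpos
    (hasDerivAt hone hb).continuousAt.continuousWithinAt hderiv hnonpos (tendsto_atTop hone)
  refine hmajorant.neg.mono' ?_ ?_
  · refine (measurable_deriv (thetaSeries ε)).aestronglyMeasurable.congr ?_
    filter_upwards [ae_restrict_mem measurableSet_Ioi] with a ha
    exact (hasDerivAt hε (hb.trans ha)).deriv
  · filter_upwards [ae_restrict_mem measurableSet_Ioi] with a ha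
    exact abs_deriv_le hε (hb.trans ha)

end thetaSeries

lemma hasDerivAt_inv_sqrt_mul_exp_neg_div (p : ℝ) {a : ℝ} (ha : 0 < a) :
    HasDerivAt (fun a => (√a)⁻¹ * exp (-p / a))
      ((√a)⁻¹ * exp (-p / a) * ((2 * p - a) / (2 * a ^ 2))) a := by
  have hsqrt := (hasDerivAt_sqrt ha.ne').inv (sqrt_ne_zero'.mpr ha)
  have hexp := ((hasDerivAt_inv ha.ne').const_mul (-p)).exp
  refine (hsqrt.mul hexp).congr_of_eventuallyEq ?_ |>.congr_deriv ?_
  · filter_upwards with y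
    simp [div_eq_mul_inv]
  · have hs := sq_sqrt ha.le
    have := sqrt_pos.mpr ha
    simp only [Pi.inv_apply]
    field_simp
    rw [hs]
    ring

lemma monotoneOn_inv_sqrt_mul_exp_neg_div (p : ℝ) :
    MonotoneOn (fun a => (√a)⁻¹ * exp (-p / a)) (Ioc 0 (2 * p)) := by
  refine monotoneOn_of_hasDerivWithinAt_nonneg (convex_Ioc 0 (2 * p))
    (f' := fun a => (√a)⁻¹ * exp (-p / a) * ((2 * p - a) / (2 * a ^ 2))) ?_
    (fun a ha => ?_) (fun a ha => ?_)
  · exact fun a ha => (hasDerivAt_inv_sqrt_mul_exp_neg_div p ha.1).continuousAt.continuousWithinAt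
  · rw [interior_Ioc] at ha
    exact (hasDerivAt_inv_sqrt_mul_exp_neg_div p ha.1).hasDerivWithinAt
  · rw [interior_Ioc] at ha
    have : 0 ≤ 2 * p - a := by linarith [ha.2]
    have := ha.1
    positivity

lemma tendsto_inv_sqrt_mul_exp_neg_div_nhdsGT_zero {p : ℝ} (hp : 0 < p) :
    Tendsto (fun a => (√a)⁻¹ * exp (-p / a)) (𝓝[>] 0) (𝓝 0) := by
  refine ((tendsto_rpow_mul_exp_neg_mul_atTop_nhds_zero (1 / 2) p hp).comp
    tendsto_inv_nhdsGT_zero).congr fun a => ?_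
  rw [Function.comp_apply, ← sqrt_eq_rpow, sqrt_inv, neg_div, neg_mul, div_eq_mul_inv]

noncomputable def altTheta : ℝ → ℝ := thetaSeries fun k => (-1) ^ k

noncomputable def altTheta' : ℝ → ℝ := thetaSeries fun k => -π * k ^ 2 * (-1) ^ k

lemma hasDerivAt_altTheta {a : ℝ} (ha : 0 < a) : HasDerivAt altTheta (altTheta' a) a :=
  thetaSeries.hasDerivAt (fun k => (abs_neg_one_zpow k).le) ha

lemma integrableOn_Ioi_altTheta' {b : ℝ} (hb : 0 < b) : IntegrableOn altTheta' (Ioi b) :=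
  thetaSeries.integrableOn_Ioi_deriv (fun k => (abs_neg_one_zpow k).le) hb

lemma altTheta_eq_tsum {a : ℝ} (ha : 0 < a) :
    altTheta a = ∑' n : ℤ, (√a)⁻¹ * exp (-(π * (n - 1 / 2) ^ 2) / a) := by
  have key := Complex.tsum_exp_neg_quadratic (a := (a : ℂ)) (by simpa using ha) (Complex.I / 2)
  have hlhs (n : ℤ) : Complex.exp (-π * a * n ^ 2 + 2 * π * (Complex.I / 2) * n) =
      (((-1) ^ n * exp (-π * a * n ^ 2) : ℝ) : ℂ) := by
    rw [Complex.exp_add, mul_comm, show 2 * π * (Complex.I / 2) * n = n * (π * Complex.I) by ring,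
      Complex.exp_int_mul, Complex.exp_pi_mul_I]
    push_cast
    ring
  have hrhs (n : ℤ) : Complex.exp (-π / a * (n + Complex.I * (Complex.I / 2)) ^ 2) =
      (exp (-(π * (n - 1 / 2) ^ 2) / a) : ℂ) := by
    rw [show Complex.I * (Complex.I / 2) = Complex.I * Complex.I / 2 by ring, Complex.I_mul_I]
    push_cast
    ring_nf
  have hsqrt : (1 : ℂ) / (a : ℂ) ^ (1 / 2 : ℂ) = ((√a)⁻¹ : ℝ) := by
    rw [sqrt_eq_rpow, Complex.ofReal_inv, Complex.ofReal_cpow ha.le]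
    norm_num
  simp_rw [hlhs, hrhs, hsqrt, ← Complex.ofReal_tsum, ← Complex.ofReal_mul,
    Complex.ofReal_inj] at key
  rw [altTheta, thetaSeries, key, tsum_mul_left]

lemma summable_inv_sqrt_mul_exp_neg_div {a : ℝ} (ha : 0 < a) :
    Summable fun n : ℤ => (√a)⁻¹ * exp (-(π * (n - 1 / 2) ^ 2) / a) := by
  refine ((summable_abs_pow_mul_exp_neg_mul_sub_sq (div_pos pi_pos ha) (1 / 2) 0).mul_left
    (√a)⁻¹).congr fun n => ?_
  rw [pow_zero, one_mul, neg_div, neg_mul, div_mul_eq_mul_div]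

lemma one_le_two_mul_pi_mul_sq_sub_half (n : ℤ) : 1 ≤ 2 * (π * (n - 1 / 2) ^ 2) := by
  have hn : 1 / 4 ≤ ((n : ℝ) - 1 / 2) ^ 2 := by
    rcases le_or_gt n 0 with h | h
    · have : (n : ℝ) ≤ 0 := by exact_mod_cast h
      nlinarith
    · have : (1 : ℝ) ≤ n := by exact_mod_cast h
      nlinarith
  nlinarith [pi_gt_three]

lemma monotoneOn_altTheta : MonotoneOn altTheta (Ioc 0 1) := by
  intro a ha b hb hab
  rw [altTheta_eq_tsum ha.1, altTheta_eq_tsum hb.1]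
  refine Summable.tsum_le_tsum (fun n => ?_) (summable_inv_sqrt_mul_exp_neg_div ha.1)
    (summable_inv_sqrt_mul_exp_neg_div hb.1)
  have hn := one_le_two_mul_pi_mul_sq_sub_half n
  exact monotoneOn_inv_sqrt_mul_exp_neg_div _ ⟨ha.1, ha.2.trans hn⟩ ⟨hb.1, hb.2.trans hn⟩ hab

lemma tendsto_altTheta_nhdsGT_zero : Tendsto altTheta (𝓝[>] 0) (𝓝 0) := by
  have hlim := tendsto_tsum_of_dominated_convergence (summable_inv_sqrt_mul_exp_neg_div one_pos)
    (fun n => tendsto_inv_sqrt_mul_exp_neg_div_nhdsGT_zero (p := π * (n - 1 / 2) ^ 2)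
      (by linarith [one_le_two_mul_pi_mul_sq_sub_half n]))
    (eventually_of_mem (Ioc_mem_nhdsGT one_pos) fun a ha n => ?_)
  · rw [tsum_zero] at hlim
    refine hlim.congr' (eventually_of_mem self_mem_nhdsWithin fun a ha => ?_)
    exact (altTheta_eq_tsum ha).symm
  · have hn := one_le_two_mul_pi_mul_sq_sub_half n
    rw [norm_of_nonneg (by have := ha.1; positivity)]
    exact monotoneOn_inv_sqrt_mul_exp_neg_div _ ⟨ha.1, ha.2.trans hn⟩ ⟨one_pos, hn⟩ ha.2

lemma altTheta'_nonneg {a : ℝ} (ha : a ∈ Ioo 0 1) : 0 ≤ altTheta' a := by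
  refine (hasDerivAt_altTheta ha.1).hasDerivWithinAt.nonneg_of_monotoneOn ?_ monotoneOn_altTheta
  exact accPt_iff_frequently_nhdsNE.mpr <| (eventually_nhdsWithin_of_eventually_nhds <|
    mem_of_superset (Ioo_mem_nhds ha.1 ha.2) Ioo_subset_Ioc_self).frequently

lemma integral_Ioi_altTheta' : ∫ a in Ioi 0, altTheta' a = 1 := by
  set g := Function.update altTheta 0 0
  have hderiv (a : ℝ) (ha : a ∈ Ioi 0) : HasDerivAt g (altTheta' a) a :=
    (hasDerivAt_altTheta ha).congr_of_eventuallyEq <|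
      eventually_of_mem (Ioi_mem_nhds ha) fun y hy => Function.update_of_ne hy.out.ne' _ _
  have hcont₀ : ContinuousWithinAt g (Ici 0) 0 := by
    rw [continuousWithinAt_update_same, Ici_sdiff_left]
    exact tendsto_altTheta_nhdsGT_zero
  have hcont : ContinuousOn g (Icc 0 1) := by
    intro a ha
    rcases ha.1.eq_or_lt with rfl | ha₀
    · exact hcont₀.mono Icc_subset_Ici_self
    · exact (hderiv a ha₀).continuousAt.continuousWithinAt
  have hint : IntegrableOn altTheta' (Ioi 0) := by
    rw [← Ioc_union_Ioi_eq_Ioi zero_le_one]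
    exact (intervalIntegral.integrableOn_deriv_of_nonneg hcont (fun a ha => hderiv a ha.1)
      fun a ha => altTheta'_nonneg ha).union (integrableOn_Ioi_altTheta' one_pos)
  have hlim : Tendsto g atTop (𝓝 1) := by
    refine (thetaSeries.tendsto_atTop fun k => (abs_neg_one_zpow k).le).congr' ?_ |>.trans
      (by simp)
    exact eventually_of_mem (Ioi_mem_atTop 0) fun y hy => (Function.update_of_ne hy.ne' _ _).symm
  rw [integral_Ioi_of_hasDerivAt_of_tendsto hcont₀ hderiv hint hlim]
  simp [g]

/-- The total mass of the measure `ν(dt) = −(π²/16) ∑_{k∈ℤ} (−1)^k k² e^{−tπ²k²/8} dt`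
on `(0,∞)` equals `1/2`. -/
theorem stmt_10 :
    ∫ t in Set.Ioi (0 : ℝ),
      -(Real.pi ^ 2 / 16) *
        ∑' k : ℤ, (-1 : ℝ) ^ k * (k : ℝ) ^ 2 * Real.exp (-t * Real.pi ^ 2 * (k : ℝ) ^ 2 / 8)
      = 1 / 2 := by
  have hintegrand (t : ℝ) :
      -(π ^ 2 / 16) * ∑' k : ℤ, (-1 : ℝ) ^ k * (k : ℝ) ^ 2 * exp (-t * π ^ 2 * (k : ℝ) ^ 2 / 8) =
        π / 16 * altTheta' (π / 8 * t) := by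
    rw [altTheta', thetaSeries, ← tsum_mul_left, ← tsum_mul_left]
    congr 1 with k
    rw [show -π * (π / 8 * t) * k ^ 2 = -t * π ^ 2 * k ^ 2 / 8 by ring]
    ring
  simp_rw [hintegrand]
  rw [integral_const_mul, integral_comp_mul_left_Ioi _ _ (by positivity), mul_zero,
    integral_Ioi_altTheta', smul_eq_mul]
  field_simp
  norm_num
end

section
/- For every t > 0, the identity ∑_{k ∈ ℤ} (−1)^k · exp(−t π² k² / 8) = √(8/(π t)) · ∑_{k ∈ ℤ} exp(−8 (k + 1/2)² / t) holds, where both series converge absolutely. -/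
/-!
Poisson summation for the Gaussian `x ↦ e^{-π a x²}` twisted by the character `x ↦ e^{-iπx}`
(Mathlib's `Complex.tsum_exp_neg_quadratic` with `b = -i/2`): the twist is `(-1)^k` at the
integers and shifts the Fourier side to the half-integers. The theorem is the case `a = tπ/8`.
-/

open Complex Real

lemma Real.summable_exp_neg_mul_int_add_sq {a : ℝ} (ha : 0 < a) (c : ℝ) :
    Summable fun k : ℤ => rexp (-a * (k + c) ^ 2) := by
  -- `e^{-a(k+c)²} = e^{-ac²} ‖θ-term‖` for `τ = i a/π`, `z = i a c/π`
  have hθ := (summable_jacobiTheta₂_term_iff (I * (a * c / π : ℝ)) (I * (a / π : ℝ))).mpr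
    (by simpa using div_pos ha pi_pos)
  refine (hθ.norm.mul_left (rexp (-a * c ^ 2))).congr fun k => ?_
  rw [norm_jacobiTheta₂_term, ← Real.exp_add]
  simp only [mul_im, I_re, I_im, ofReal_re, ofReal_im]
  field_simp
  ring_nf

theorem Real.tsum_neg_one_zpow_mul_exp_neg_mul_int_sq {a : ℝ} (ha : 0 < a) :
    ∑' k : ℤ, (-1 : ℝ) ^ k * rexp (-π * a * k ^ 2) =
      1 / √a * ∑' k : ℤ, rexp (-π / a * (k + 1 / 2) ^ 2) := by
  have hPoisson := Complex.tsum_exp_neg_quadratic (by simpa using ha : 0 < (a : ℂ).re) (-I / 2)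
  have hsqrt : (a : ℂ) ^ (1 / 2 : ℂ) = (√a : ℂ) := by
    rw [Real.sqrt_eq_rpow, ofReal_cpow ha.le]
    norm_num
  have hshift : ∀ k : ℤ, (k : ℂ) + I * (-I / 2) = ((k + 1 / 2 : ℝ) : ℂ) := by
    intro k
    push_cast
    ring_nf
    rw [I_sq]
    ring
  have hsign : ∀ k : ℤ, cexp (-π * a * k ^ 2 + 2 * π * (-I / 2) * k) =
      ((-1 : ℝ) ^ k * rexp (-π * a * k ^ 2) : ℝ) := by
    intro k
    rw [show (2 * π * (-I / 2) * k : ℂ) = k * -(π * I) by ring, Complex.exp_add,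
      exp_int_mul, exp_neg_pi_mul_I]
    push_cast
    ring
  apply ofReal_injective
  simp only [hsign, hshift, hsqrt] at hPoisson
  rw [ofReal_tsum, hPoisson, ofReal_mul, ofReal_tsum]
  norm_cast

/-- Poisson summation identity:
`∑_{k∈ℤ} (−1)^k e^{−tπ²k²/8} = √(8/(πt)) ∑_{k∈ℤ} e^{−8(k+1/2)²/t}` for `t > 0`. -/
theorem stmt_11 (t : ℝ) (ht : 0 < t) :
    Summable (fun k : ℤ => (-1 : ℝ) ^ k * Real.exp (-t * Real.pi ^ 2 * (k : ℝ) ^ 2 / 8)) ∧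
    Summable (fun k : ℤ => Real.exp (-8 * ((k : ℝ) + 1 / 2) ^ 2 / t)) ∧
    ∑' k : ℤ, (-1 : ℝ) ^ k * Real.exp (-t * Real.pi ^ 2 * (k : ℝ) ^ 2 / 8)
      = Real.sqrt (8 / (Real.pi * t)) * ∑' k : ℤ, Real.exp (-8 * ((k : ℝ) + 1 / 2) ^ 2 / t) := by
  have ha : 0 < t * π / 8 := by positivity
  have hlhs : ∀ k : ℤ, -t * π ^ 2 * (k : ℝ) ^ 2 / 8 = -π * (t * π / 8) * k ^ 2 := fun k => by ring
  have hrhs : ∀ k : ℤ, -8 * ((k : ℝ) + 1 / 2) ^ 2 / t = -π / (t * π / 8) * (k + 1 / 2) ^ 2 :=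
    fun k => by field_simp
  have hsqrt : √(8 / (π * t)) = 1 / √(t * π / 8) := by
    rw [one_div, ← Real.sqrt_inv, inv_div, mul_comm]
  simp only [hlhs, hrhs, hsqrt]
  refine ⟨?_, ?_, Real.tsum_neg_one_zpow_mul_exp_neg_mul_int_sq ha⟩
  · refine (Real.summable_exp_neg_mul_int_add_sq (mul_pos pi_pos ha) 0).of_norm_bounded
      fun k => ?_
    simp
  · simpa only [neg_div] using Real.summable_exp_neg_mul_int_add_sq (div_pos pi_pos ha) (1 / 2)
end

section
/- Let n ≥ 2 and let σ denote the uniform probability measure on the unit sphere S^{n−1} ⊂ ℝⁿ. Let (x_k) be a sequence in the open unit ball of ℝⁿ converging to a point a with ‖a‖ = 1, and let φ : S^{n−1} → ℝ be continuous. Then ∫_{S^{n−1}} φ(y) · (1 − ‖x_k‖²) / ‖x_k − y‖ⁿ dσ(y) → φ(a) as k → ∞. In other words, the harmonic (Poisson kernel) measures P(x_k, dy) = (1 − ‖x_k‖²) ‖x_k − y‖^{−n} σ(dy) converge weakly to the Dirac mass δ_a. -/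
/-!
The Poisson kernel `P(x, y) = (1 - ‖x‖²) / ‖x - y‖ⁿ` is harmonic in `x`, so
`G x = ∫ P(x, y) dσ(y)` is harmonic in the open ball; by rotation invariance of `σ` it is also
radial, `G x = g ‖x‖`. The Laplace equation then reads `r g'' + (n - 1) g' = 0`, and since
`r ↦ r ^ (n - 1) g' r` is constant and vanishes at `0`, `g' = 0` and `G ≡ G 0 = 1`. Since moreover `P(x_k, ·) → 0`
uniformly on the sphere away from `a` as `x_k → a`, the functions `P(x_k, ·)` are peak functions
at `a` and `∫ φ P(x_k, ·) dσ → φ a`.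
-/

open MeasureTheory Filter Topology Metric Set
open scoped RealInnerProductSpace

theorem eq_of_hasDerivAt_eq_zero {f : ℝ → ℝ} {a b : ℝ} (hab : a ≤ b)
    (hf : ContinuousOn f (Icc a b)) (hf' : ∀ x ∈ Ioo a b, HasDerivAt f 0 x) : f b = f a := by
  rcases hab.eq_or_lt with rfl | hlt
  · rfl
  obtain ⟨c, -, hc⟩ := exists_hasDerivAt_eq_slope f (fun _ => 0) hlt hf hf'
  rw [eq_comm, div_eq_zero_iff, sub_eq_zero, sub_eq_zero] at hc
  exact hc.resolve_right hlt.ne'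

theorem eq_zero_of_mul_deriv_add_mul_eq_zero {f f' : ℝ → ℝ} {m : ℕ} (hm : m ≠ 0) {b : ℝ}
    (hf₀ : ContinuousAt f 0) (hf : ∀ r ∈ Ioo 0 b, HasDerivAt f (f' r) r)
    (hode : ∀ r ∈ Ioo 0 b, r * f' r + m * f r = 0) {r : ℝ} (hr : r ∈ Ioo 0 b) : f r = 0 := by
  have hcont : ContinuousOn (fun s => s ^ m * f s) (Icc 0 r) := fun s hs => by
    refine ((continuous_pow m).continuousAt.mul ?_).continuousWithinAt
    rcases hs.1.eq_or_lt with rfl | hs₀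
    · exact hf₀
    · exact (hf s ⟨hs₀, hs.2.trans_lt hr.2⟩).continuousAt
  have hderiv : ∀ s ∈ Ioo 0 r, HasDerivAt (fun s => s ^ m * f s) 0 s := fun s hs => by
    have hsb : s ∈ Ioo 0 b := ⟨hs.1, hs.2.trans hr.2⟩
    refine ((hasDerivAt_pow m s).mul (hf s hsb)).congr_deriv ?_
    obtain ⟨k, rfl⟩ := Nat.exists_eq_succ_of_ne_zero hm
    have := hode s hsb
    simp only [Nat.succ_sub_one, pow_succ, Nat.cast_succ] at this ⊢
    linear_combination s ^ k * this
  have := eq_of_hasDerivAt_eq_zero hr.1.le hcont hderiv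
  simp only [zero_pow hm, zero_mul] at this
  exact (mul_eq_zero.1 this).resolve_left (pow_ne_zero m hr.1.ne')

/-- The second derivative of a radial function `x ↦ g ‖x‖` at a point at distance `r` from the
origin, in a direction orthogonal to that point, is `g' r / r`. -/
theorem eq_div_of_hasDerivAt_comp_sqrt {g g₁ W : ℝ → ℝ} {g₂ r w : ℝ} (hr : 0 < r)
    (hg : ∀ᶠ s in 𝓝 r, HasDerivAt g (g₁ s) s) (hg₁ : HasDerivAt g₁ g₂ r)
    (hW : ∀ᶠ t in 𝓝 0, HasDerivAt (fun t => g √(r ^ 2 + t ^ 2)) (W t) t)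
    (hW₀ : HasDerivAt W w 0) : w = g₁ r / r := by
  set ρ : ℝ → ℝ := fun t => √(r ^ 2 + t ^ 2)
  have hρ₀ : ρ 0 = r := by simp [ρ, Real.sqrt_sq hr.le]
  have hρpos : ∀ t, 0 < ρ t := fun t => Real.sqrt_pos.2 (by positivity)
  have hρ : ∀ t, HasDerivAt ρ (t / ρ t) t := fun t => by
    refine (((hasDerivAt_pow 2 t).const_add (r ^ 2)).sqrt (by positivity)).congr_deriv ?_
    simp only [ρ]
    field_simp
    ring
  have hW_eq : W =ᶠ[𝓝 0] fun t => g₁ (ρ t) * (t / ρ t) := by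
    have hg' : ∀ᶠ t in 𝓝 0, HasDerivAt g (g₁ (ρ t)) (ρ t) := by
      rw [← hρ₀] at hg
      exact (hρ 0).continuousAt.eventually hg
    filter_upwards [hW, hg'] with t hWt hgt
    exact hWt.unique (hgt.comp t (hρ t))
  have h := (hρ₀ ▸ hg₁).comp 0 (hρ 0) |>.mul ((hasDerivAt_id 0).div (hρ 0) (hρpos 0).ne')
  refine hW₀.unique ((h.congr_of_eventuallyEq hW_eq).congr_deriv ?_)
  simp only [hρ₀, id, Function.comp, Pi.div_apply]
  field_simp
  ring

namespace UnitBall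

section NormedGroup

variable {F : Type*} [NormedAddCommGroup F] {n : ℕ}

/-- Equal to `(1 - ‖x‖²) / ‖x - y‖ⁿ` (`poissonKernel_eq_div`), but written through the squared
distance so that it is differentiable in `x` off the diagonal. -/
noncomputable def poissonKernel (n : ℕ) (x y : F) : ℝ :=
  (1 - ‖x‖ ^ 2) * (‖x - y‖ ^ 2) ^ (-(n : ℝ) / 2)

theorem poissonKernel_eq_div (x y : F) :
    poissonKernel n x y = (1 - ‖x‖ ^ 2) / ‖x - y‖ ^ n := by
  have h : (‖x - y‖ ^ 2) ^ (-(n : ℝ) / 2) = (‖x - y‖ ^ n)⁻¹ := by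
    rw [← Real.rpow_natCast ‖x - y‖ 2, ← Real.rpow_mul (norm_nonneg _),
      ← Real.rpow_natCast ‖x - y‖ n, ← Real.rpow_neg (norm_nonneg _)]
    congr 1
    push_cast
    ring
  rw [poissonKernel, h, div_eq_mul_inv]

theorem poissonKernel_nonneg {x : F} (hx : ‖x‖ ≤ 1) (y : F) : 0 ≤ poissonKernel n x y := by
  rw [poissonKernel_eq_div]
  have : ‖x‖ ^ 2 ≤ 1 := pow_le_one₀ (norm_nonneg x) hx
  exact div_nonneg (by linarith) (by positivity)

theorem continuousOn_rpow_normSq_sub (q : ℝ) :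
    ContinuousOn (fun p : F × F => (‖p.1 - p.2‖ ^ 2) ^ q) (diagonal F)ᶜ := fun p hp =>
  ((continuous_fst.sub continuous_snd).norm.pow 2).continuousAt.rpow_const
    (Or.inl (by simpa [sub_eq_zero] using hp)) |>.continuousWithinAt

theorem continuousOn_poissonKernel :
    ContinuousOn (fun p : F × F => poissonKernel n p.1 p.2) (diagonal F)ᶜ := by
  have := continuousOn_rpow_normSq_sub (F := F) (-(n : ℝ) / 2)
  simp only [poissonKernel]
  fun_prop

theorem tendstoUniformlyOn_poissonKernel {ι : Type*} {l : Filter ι} {x : ι → F} {a : F}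
    (hxa : Tendsto x l (𝓝 a)) (ha : ‖a‖ = 1) {u : Set F} (hu : u ∈ 𝓝 a) :
    TendstoUniformlyOn (fun i => poissonKernel n (x i)) 0 l (sphere 0 1 \ u) := by
  obtain ⟨δ, hδ, hball⟩ := Metric.mem_nhds_iff.1 hu
  have hbound : Tendsto (fun i => |1 - ‖x i‖ ^ 2| / (δ / 2) ^ n) l (𝓝 0) := by
    have := (tendsto_const_nhds (x := (1 : ℝ))).sub (hxa.norm.pow 2)
    simpa [ha] using this.abs.div_const ((δ / 2) ^ n)
  rw [Metric.tendstoUniformlyOn_iff]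
  intro ε hε
  filter_upwards [hbound.eventually (gt_mem_nhds hε),
    hxa.eventually (ball_mem_nhds a (half_pos hδ))] with i hi hxi y hy
  have hfar : δ ≤ dist y a := not_lt.1 fun h => hy.2 (hball h)
  have hxy : δ / 2 ≤ ‖x i - y‖ := by
    rw [← dist_eq_norm, dist_comm]
    linarith [dist_triangle y (x i) a, mem_ball.1 hxi]
  rw [Pi.zero_apply, dist_zero_left, poissonKernel_eq_div, Real.norm_eq_abs, abs_div, abs_pow,
    abs_norm]
  calc |1 - ‖x i‖ ^ 2| / ‖x i - y‖ ^ n ≤ |1 - ‖x i‖ ^ 2| / (δ / 2) ^ n :=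
        div_le_div_of_nonneg_left (abs_nonneg _) (by positivity)
          (pow_le_pow_left₀ (by positivity) hxy n)
    _ < ε := hi

theorem continuousOn_sphere_of_continuousOn_compl_diagonal {K : F → F → ℝ}
    (hK : ContinuousOn (fun p : F × F => K p.1 p.2) (diagonal F)ᶜ) {x : F} (hx : ‖x‖ < 1) :
    ContinuousOn (K x) (sphere 0 1) :=
  hK.comp (f := fun y => (x, y)) (by fun_prop) fun y hy (hxy : x = y) => by
    rw [mem_sphere_zero_iff_norm, ← hxy] at hy
    exact hx.ne hy

section Measure

variable [MeasurableSpace F] [BorelSpace F] {σ : Measure F}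

theorem aestronglyMeasurable_of_continuousOn_sphere (hσ : ∀ᵐ y ∂σ, ‖y‖ = 1) {f : F → ℝ}
    (hf : ContinuousOn f (sphere 0 1)) : AEStronglyMeasurable f σ := by
  rw [← Measure.restrict_eq_self_of_ae_mem (μ := σ) (s := sphere 0 1) (by simpa using hσ)]
  exact hf.aestronglyMeasurable isClosed_sphere.measurableSet

theorem integrable_of_continuousOn_sphere [ProperSpace F] [IsFiniteMeasure σ]
    (hσ : ∀ᵐ y ∂σ, ‖y‖ = 1) {f : F → ℝ} (hf : ContinuousOn f (sphere 0 1)) : Integrable f σ := by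
  obtain ⟨C, hC⟩ := (isCompact_sphere (0 : F) 1).exists_bound_of_continuousOn hf
  refine .of_bound (aestronglyMeasurable_of_continuousOn_sphere hσ hf) C ?_
  filter_upwards [hσ] with y hy using hC y (by simpa using hy)

theorem hasDerivAt_integral_line [NormedSpace ℝ F] [ProperSpace F] [IsFiniteMeasure σ]
    (hσ : ∀ᵐ y ∂σ, ‖y‖ = 1) {K K' : F → F → ℝ}
    (hK : ContinuousOn (fun p : F × F => K p.1 p.2) (diagonal F)ᶜ)
    (hK' : ContinuousOn (fun p : F × F => K' p.1 p.2) (diagonal F)ᶜ) {c v : F}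
    (hderiv : ∀ (t : ℝ) y, c + t • v ≠ y →
      HasDerivAt (fun s => K (c + s • v) y) (K' (c + t • v) y) t)
    {t₀ : ℝ} (ht₀ : ‖c + t₀ • v‖ < 1) :
    HasDerivAt (fun t => ∫ y, K (c + t • v) y ∂σ) (∫ y, K' (c + t₀ • v) y ∂σ) t₀ := by
  set ρ := (1 - ‖c + t₀ • v‖) / 2 with hρ
  have hρ0 : 0 < ρ := by linarith
  have hB : ∀ x ∈ closedBall (c + t₀ • v) ρ, ‖x‖ < 1 := fun x hx => by
    have := norm_le_norm_add_norm_sub' x (c + t₀ • v)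
    rw [mem_closedBall, dist_eq_norm] at hx
    linarith
  have hBK : closedBall (c + t₀ • v) ρ ×ˢ sphere 0 1 ⊆ (diagonal F)ᶜ :=
    fun p ⟨hp₁, hp₂⟩ (hp : p.1 = p.2) => by
      have := hB _ hp₁
      rw [hp, ← mem_sphere_zero_iff_norm.1 hp₂] at this
      exact this.false
  obtain ⟨C, hC⟩ := ((isCompact_closedBall _ _).prod
    (isCompact_sphere (0 : F) 1)).exists_bound_of_continuousOn (hK'.mono hBK)
  have hs : (fun t : ℝ => c + t • v) ⁻¹' closedBall (c + t₀ • v) ρ ∈ 𝓝 t₀ :=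
    (Continuous.continuousAt (by fun_prop)).preimage_mem_nhds (closedBall_mem_nhds _ hρ0)
  have hslice : ∀ {L : F → F → ℝ}, ContinuousOn (fun p : F × F => L p.1 p.2) (diagonal F)ᶜ →
      ∀ {x : F}, ‖x‖ < 1 → Integrable (L x) σ := fun hL _ hx =>
    integrable_of_continuousOn_sphere hσ (continuousOn_sphere_of_continuousOn_compl_diagonal hL hx)
  refine (hasDerivAt_integral_of_dominated_loc_of_deriv_le (F := fun t => K (c + t • v))
    (F' := fun t => K' (c + t • v)) (bound := fun _ => C) hs
    (Filter.mem_of_superset hs fun t ht => (hslice hK (hB _ ht)).aestronglyMeasurable)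
    (hslice hK ht₀) (hslice hK' ht₀).aestronglyMeasurable ?_ (integrable_const C) ?_).2
  · filter_upwards [hσ] with y hy t ht
    exact hC (_, y) ⟨ht, mem_sphere_zero_iff_norm.2 hy⟩
  · filter_upwards [hσ] with y hy t ht
    refine hderiv t y fun h => ?_
    have : ‖c + t • v‖ < 1 := hB _ ht
    rw [h, hy] at this
    exact this.false

end Measure

end NormedGroup

section InnerProduct

variable {F : Type*} [NormedAddCommGroup F] [InnerProductSpace ℝ F] {n : ℕ}

noncomputable def poissonKernelDeriv (n : ℕ) (x v y : F) : ℝ :=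
  -2 * ⟪x, v⟫ * (‖x - y‖ ^ 2) ^ (-(n : ℝ) / 2)
    - n * (1 - ‖x‖ ^ 2) * ⟪x - y, v⟫ * (‖x - y‖ ^ 2) ^ (-(n : ℝ) / 2 - 1)

noncomputable def poissonKernelDeriv2 (n : ℕ) (x v y : F) : ℝ :=
  -2 * ‖v‖ ^ 2 * (‖x - y‖ ^ 2) ^ (-(n : ℝ) / 2)
    + (4 * n * ⟪x, v⟫ * ⟪x - y, v⟫ - n * (1 - ‖x‖ ^ 2) * ‖v‖ ^ 2)
      * (‖x - y‖ ^ 2) ^ (-(n : ℝ) / 2 - 1)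
    + n * (n + 2) * (1 - ‖x‖ ^ 2) * ⟪x - y, v⟫ ^ 2 * (‖x - y‖ ^ 2) ^ (-(n : ℝ) / 2 - 2)

section Line

variable (c v y : F) (t : ℝ)

theorem hasDerivAt_normSq_line :
    HasDerivAt (fun s : ℝ => ‖c + s • v - y‖ ^ 2) (2 * ⟪c + t • v - y, v⟫) t := by
  have hline : HasDerivAt (fun s : ℝ => c + s • v - y) v t := by
    simpa using (((hasDerivAt_id t).smul_const v).const_add c).sub_const y
  simp_rw [← real_inner_self_eq_norm_sq]
  exact (hline.inner ℝ hline).congr_deriv (by rw [real_inner_comm]; ring)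

theorem hasDerivAt_rpow_normSq_line (q : ℝ) (h : c + t • v ≠ y) :
    HasDerivAt (fun s : ℝ => (‖c + s • v - y‖ ^ 2) ^ q)
      (2 * q * ⟪c + t • v - y, v⟫ * (‖c + t • v - y‖ ^ 2) ^ (q - 1)) t := by
  have h0 : ‖c + t • v - y‖ ^ 2 ≠ 0 := by simpa [sub_eq_zero] using h
  refine ((Real.hasDerivAt_rpow_const (p := q) (Or.inl h0)).comp t
    (hasDerivAt_normSq_line c v y t)).congr_deriv ?_
  ring

theorem hasDerivAt_inner_line (w : F) :
    HasDerivAt (fun s : ℝ => ⟪c + s • v - w, v⟫) (‖v‖ ^ 2) t := by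
  have hline : HasDerivAt (fun s : ℝ => c + s • v - w) v t := by
    simpa using (((hasDerivAt_id t).smul_const v).const_add c).sub_const w
  simpa [real_inner_self_eq_norm_sq] using hline.inner ℝ (hasDerivAt_const t v)

theorem hasDerivAt_poissonKernel_line (h : c + t • v ≠ y) :
    HasDerivAt (fun s : ℝ => poissonKernel n (c + s • v) y)
      (poissonKernelDeriv n (c + t • v) v y) t := by
  have hA := (hasDerivAt_normSq_line c v 0 t).const_sub 1
  simp only [sub_zero] at hA
  exact (hA.mul (hasDerivAt_rpow_normSq_line c v y t (-(n : ℝ) / 2) h)).congr_deriv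
    (by simp only [poissonKernelDeriv]; ring)

theorem hasDerivAt_poissonKernelDeriv_line (h : c + t • v ≠ y) :
    HasDerivAt (fun s : ℝ => poissonKernelDeriv n (c + s • v) v y)
      (poissonKernelDeriv2 n (c + t • v) v y) t := by
  have hA := (hasDerivAt_normSq_line c v 0 t).const_sub 1
  have hx := hasDerivAt_inner_line c v t 0
  have hxy := hasDerivAt_inner_line c v t y
  have h₁ := hasDerivAt_rpow_normSq_line c v y t (-(n : ℝ) / 2) h
  have h₂ := hasDerivAt_rpow_normSq_line c v y t (-(n : ℝ) / 2 - 1) h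
  simp only [sub_zero] at hA hx
  exact (((hx.const_mul (-2)).mul h₁).sub (((hA.const_mul (n : ℝ)).mul hxy).mul h₂)).congr_deriv
    (by simp only [poissonKernelDeriv2, Pi.mul_apply]; ring_nf)

end Line

theorem sum_poissonKernelDeriv2_eq_zero {ι : Type*} [Fintype ι] (b : OrthonormalBasis ι ℝ F)
    (hn : Fintype.card ι = n) {x y : F} (hy : ‖y‖ = 1) (hxy : x ≠ y) :
    ∑ i, poissonKernelDeriv2 n x (b i) y = 0 := by
  set s := ‖x - y‖ ^ 2 with hs
  have hs0 : s ≠ 0 := by simpa [hs, sub_eq_zero] using hxy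
  have hsummand : ∀ i, poissonKernelDeriv2 n x (b i) y
      = (-2 * s ^ (-(n : ℝ) / 2) - n * (1 - ‖x‖ ^ 2) * s ^ (-(n : ℝ) / 2 - 1))
        + 4 * n * s ^ (-(n : ℝ) / 2 - 1) * (⟪x, b i⟫ * ⟪b i, x - y⟫)
        + n * (n + 2) * (1 - ‖x‖ ^ 2) * s ^ (-(n : ℝ) / 2 - 2) * (⟪x - y, b i⟫ * ⟪b i, x - y⟫) := by
    intro i
    simp only [poissonKernelDeriv2, b.orthonormal.1 i, real_inner_comm (b i)]
    ring
  have hpow₁ : s ^ (-(n : ℝ) / 2) = s ^ (-(n : ℝ) / 2 - 1) * s := by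
    rw [← Real.rpow_add_one hs0]; ring_nf
  have hpow₂ : s ^ (-(n : ℝ) / 2 - 1) = s ^ (-(n : ℝ) / 2 - 2) * s := by
    rw [← Real.rpow_add_one hs0]; ring_nf
  have hs_eq : s = ‖x‖ ^ 2 - 2 * ⟪x, y⟫ + 1 := by rw [hs, norm_sub_sq_real, hy]; ring
  simp only [hsummand, Finset.sum_add_distrib, Finset.sum_const, ← Finset.mul_sum,
    b.sum_inner_mul_inner, Finset.card_univ, hn, nsmul_eq_mul]
  rw [real_inner_self_eq_norm_sq, ← hs, inner_sub_right, real_inner_self_eq_norm_sq, hpow₁, hpow₂,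
    hs_eq]
  ring

theorem continuousOn_poissonKernelDeriv (v : F) :
    ContinuousOn (fun p : F × F => poissonKernelDeriv n p.1 v p.2) (diagonal F)ᶜ := by
  have := continuousOn_rpow_normSq_sub (F := F) (-(n : ℝ) / 2)
  have := continuousOn_rpow_normSq_sub (F := F) (-(n : ℝ) / 2 - 1)
  simp only [poissonKernelDeriv]
  fun_prop

theorem continuousOn_poissonKernelDeriv2 (v : F) :
    ContinuousOn (fun p : F × F => poissonKernelDeriv2 n p.1 v p.2) (diagonal F)ᶜ := by
  have := continuousOn_rpow_normSq_sub (F := F) (-(n : ℝ) / 2)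
  have := continuousOn_rpow_normSq_sub (F := F) (-(n : ℝ) / 2 - 1)
  have := continuousOn_rpow_normSq_sub (F := F) (-(n : ℝ) / 2 - 2)
  simp only [poissonKernelDeriv2]
  fun_prop

section Measure

variable [MeasurableSpace F] [BorelSpace F] {σ : Measure F}

theorem integral_poissonKernel_eq_of_norm_eq
    (hinv : ∀ R : F ≃ₗᵢ[ℝ] F, Measure.map R σ = σ) {x x' : F} (h : ‖x‖ = ‖x'‖) :
    ∫ y, poissonKernel n x y ∂σ = ∫ y, poissonKernel n x' y ∂σ := by
  set R := Submodule.reflection (ℝ ∙ (x - x'))ᗮ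
  have hR : R x = x' := Submodule.reflection_sub h
  calc ∫ y, poissonKernel n x y ∂σ = ∫ y, poissonKernel n x' (R y) ∂σ := by
        congr 1
        funext y
        rw [poissonKernel, poissonKernel, ← hR, ← map_sub, R.norm_map, R.norm_map]
    _ = ∫ y, poissonKernel n x' y ∂σ := by
        have := integral_map_equiv (μ := σ) R.toMeasurableEquiv (poissonKernel n x')
        rw [LinearIsometryEquiv.coe_toMeasurableEquiv, hinv] at this
        exact this.symm

variable [ProperSpace F] [IsFiniteMeasure σ]

theorem hasDerivAt_integral_poissonKernel_line (hσ : ∀ᵐ y ∂σ, ‖y‖ = 1) {c v : F} {t : ℝ}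
    (ht : ‖c + t • v‖ < 1) :
    HasDerivAt (fun s => ∫ y, poissonKernel n (c + s • v) y ∂σ)
      (∫ y, poissonKernelDeriv n (c + t • v) v y ∂σ) t :=
  hasDerivAt_integral_line (K' := fun x y => poissonKernelDeriv n x v y) hσ
    continuousOn_poissonKernel (continuousOn_poissonKernelDeriv v)
    (fun s y h => hasDerivAt_poissonKernel_line c v y s h) ht

theorem hasDerivAt_integral_poissonKernelDeriv_line (hσ : ∀ᵐ y ∂σ, ‖y‖ = 1) {c v : F} {t : ℝ}
    (ht : ‖c + t • v‖ < 1) :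
    HasDerivAt (fun s => ∫ y, poissonKernelDeriv n (c + s • v) v y ∂σ)
      (∫ y, poissonKernelDeriv2 n (c + t • v) v y ∂σ) t :=
  hasDerivAt_integral_line (K := fun x y => poissonKernelDeriv n x v y)
    (K' := fun x y => poissonKernelDeriv2 n x v y) hσ (continuousOn_poissonKernelDeriv v)
    (continuousOn_poissonKernelDeriv2 v)
    (fun s y h => hasDerivAt_poissonKernelDeriv_line c v y s h) ht

theorem hasDerivAt_integral_poissonKernel_smul (hσ : ∀ᵐ y ∂σ, ‖y‖ = 1) {e : F} (he : ‖e‖ = 1)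
    {s : ℝ} (hs : |s| < 1) :
    HasDerivAt (fun s : ℝ => ∫ y, poissonKernel n (s • e) y ∂σ)
      (∫ y, poissonKernelDeriv n (s • e) e y ∂σ) s := by
  simpa using hasDerivAt_integral_poissonKernel_line (c := 0) hσ (by simpa [norm_smul, he])

theorem hasDerivAt_integral_poissonKernelDeriv_smul (hσ : ∀ᵐ y ∂σ, ‖y‖ = 1) {e : F}
    (he : ‖e‖ = 1) {s : ℝ} (hs : |s| < 1) :
    HasDerivAt (fun s : ℝ => ∫ y, poissonKernelDeriv n (s • e) e y ∂σ)
      (∫ y, poissonKernelDeriv2 n (s • e) e y ∂σ) s := by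
  simpa using hasDerivAt_integral_poissonKernelDeriv_line (c := 0) hσ (by simpa [norm_smul, he])

theorem integral_poissonKernelDeriv2_of_inner_eq_zero (hσ : ∀ᵐ y ∂σ, ‖y‖ = 1)
    (hinv : ∀ R : F ≃ₗᵢ[ℝ] F, Measure.map R σ = σ) {e u : F} (he : ‖e‖ = 1) (hu : ‖u‖ = 1)
    (heu : ⟪e, u⟫ = 0) {r : ℝ} (hr₀ : 0 < r) (hr₁ : r < 1) :
    ∫ y, poissonKernelDeriv2 n (r • e) u y ∂σ = (∫ y, poissonKernelDeriv n (r • e) e y ∂σ) / r := by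
  have hnorm : ∀ t : ℝ, ‖r • e + t • u‖ = √(r ^ 2 + t ^ 2) := fun t => by
    rw [← Real.sqrt_sq (norm_nonneg _), sq,
      norm_add_sq_eq_norm_sq_add_norm_sq_real (by simp [inner_smul_left, inner_smul_right, heu]),
      norm_smul, norm_smul, he, hu]
    simp [sq]
  have hradial : (fun t : ℝ => ∫ y, poissonKernel n (r • e + t • u) y ∂σ)
      = fun t => ∫ y, poissonKernel n (√(r ^ 2 + t ^ 2) • e) y ∂σ :=
    funext fun t => integral_poissonKernel_eq_of_norm_eq hinv (by
      rw [hnorm, norm_smul, he, mul_one, Real.norm_of_nonneg (Real.sqrt_nonneg _)])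
  have hnear : ∀ᶠ t in 𝓝 (0 : ℝ), ‖r • e + t • u‖ < 1 := by
    refine (Continuous.continuousAt (by fun_prop)).eventually_lt continuousAt_const ?_
    simpa [norm_smul, he, abs_of_pos hr₀] using hr₁
  refine eq_div_of_hasDerivAt_comp_sqrt hr₀ (g := fun s => ∫ y, poissonKernel n (s • e) y ∂σ)
    (g₁ := fun s => ∫ y, poissonKernelDeriv n (s • e) e y ∂σ)
    (g₂ := ∫ y, poissonKernelDeriv2 n (r • e) e y ∂σ)
    (W := fun t => ∫ y, poissonKernelDeriv n (r • e + t • u) u y ∂σ) ?_ ?_ ?_ ?_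
  · filter_upwards [Ioo_mem_nhds (by linarith : (-1 : ℝ) < r) hr₁] with s hs
    exact hasDerivAt_integral_poissonKernel_smul hσ he (abs_lt.2 hs)
  · exact hasDerivAt_integral_poissonKernelDeriv_smul hσ he (by rwa [abs_of_pos hr₀])
  · filter_upwards [hnear] with t ht
    rw [← hradial]
    exact hasDerivAt_integral_poissonKernel_line hσ ht
  · simpa using hasDerivAt_integral_poissonKernelDeriv_line (t := 0) hσ
      (by simpa using hnear.self_of_nhds)

/-- Harmonicity of `x ↦ ∫ P(x, y) dσ(y)` for its radial profile `g r = ∫ P(r e, y) dσ(y)`: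
`r g'' + (n - 1) g' = 0`. -/
theorem integral_poissonKernel_radial_ode {ι : Type*} [Fintype ι] [DecidableEq ι]
    (b : OrthonormalBasis ι ℝ F) (hn : Fintype.card ι = n) (hσ : ∀ᵐ y ∂σ, ‖y‖ = 1)
    (hinv : ∀ R : F ≃ₗᵢ[ℝ] F, Measure.map R σ = σ) (i₀ : ι) {r : ℝ} (hr₀ : 0 < r) (hr₁ : r < 1) :
    r * ∫ y, poissonKernelDeriv2 n (r • b i₀) (b i₀) y ∂σ
      + (n - 1) * ∫ y, poissonKernelDeriv n (r • b i₀) (b i₀) y ∂σ = 0 := by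
  have hre : ‖r • b i₀‖ < 1 := by
    rwa [norm_smul, b.orthonormal.1 i₀, mul_one, Real.norm_of_nonneg hr₀.le]
  have hlap : ∑ i, ∫ y, poissonKernelDeriv2 n (r • b i₀) (b i) y ∂σ = 0 := by
    rw [← integral_finsetSum (f := fun i y => poissonKernelDeriv2 n (r • b i₀) (b i) y) _
      fun i _ => integrable_of_continuousOn_sphere hσ
        (continuousOn_sphere_of_continuousOn_compl_diagonal
          (K := fun x y => poissonKernelDeriv2 n x (b i) y)
          (continuousOn_poissonKernelDeriv2 _) hre)]
    refine integral_eq_zero_of_ae ?_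
    filter_upwards [hσ] with y hy
    exact sum_poissonKernelDeriv2_eq_zero b hn hy fun h => by rw [h, hy] at hre; exact hre.false
  rw [← Finset.add_sum_erase _ _ (Finset.mem_univ i₀), Finset.sum_congr rfl fun i hi =>
    integral_poissonKernelDeriv2_of_inner_eq_zero hσ hinv (b.orthonormal.1 i₀) (b.orthonormal.1 i)
      (b.orthonormal.2 (Finset.ne_of_mem_erase hi).symm) hr₀ hr₁, Finset.sum_const,
    Finset.card_erase_of_mem (Finset.mem_univ _), Finset.card_univ, hn, nsmul_eq_mul,
    Nat.cast_sub (hn ▸ Fintype.card_pos_iff.2 ⟨i₀⟩), Nat.cast_one] at hlap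
  field_simp at hlap
  linarith

end Measure

theorem integral_poissonKernel_eq_one [FiniteDimensional ℝ F] [MeasurableSpace F] [BorelSpace F]
    {σ : Measure F} [IsProbabilityMeasure σ] (hn : 2 ≤ n) (hF : Module.finrank ℝ F = n)
    (hσ : ∀ᵐ y ∂σ, ‖y‖ = 1) (hinv : ∀ R : F ≃ₗᵢ[ℝ] F, Measure.map R σ = σ) {x : F}
    (hx : ‖x‖ < 1) : ∫ y, poissonKernel n x y ∂σ = 1 := by
  set b := (stdOrthonormalBasis ℝ F).reindex (finCongr hF)
  set i₀ : Fin n := ⟨0, by omega⟩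
  set e := b i₀
  have he : ‖e‖ = 1 := b.orthonormal.1 i₀
  set g : ℝ → ℝ := fun s => ∫ y, poissonKernel n (s • e) y ∂σ
  set g₁ : ℝ → ℝ := fun s => ∫ y, poissonKernelDeriv n (s • e) e y ∂σ
  have hg : ∀ s ∈ Ioo (-1 : ℝ) 1, HasDerivAt g (g₁ s) s := fun s hs =>
    hasDerivAt_integral_poissonKernel_smul hσ he (abs_lt.2 hs)
  have hg₁ : ∀ s ∈ Ioo (-1 : ℝ) 1,
      HasDerivAt g₁ (∫ y, poissonKernelDeriv2 n (s • e) e y ∂σ) s := fun s hs =>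
    hasDerivAt_integral_poissonKernelDeriv_smul hσ he (abs_lt.2 hs)
  have hg₁_zero : ∀ s ∈ Ioo (0 : ℝ) 1, g₁ s = 0 := fun s hs =>
    eq_zero_of_mul_deriv_add_mul_eq_zero (m := n - 1) (by omega)
      (hg₁ 0 ⟨by norm_num, by norm_num⟩).continuousAt
      (fun r hr => hg₁ r ⟨by linarith [hr.1], hr.2⟩)
      (fun r hr => by
        rw [Nat.cast_sub (by omega), Nat.cast_one]
        exact integral_poissonKernel_radial_ode b (Fintype.card_fin n) hσ hinv i₀ hr.1 hr.2) hs
  have hconst : g ‖x‖ = g 0 := by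
    refine eq_of_hasDerivAt_eq_zero (norm_nonneg x)
      (fun s hs => (hg s ⟨by linarith [hs.1], hs.2.trans_lt hx⟩).continuousAt.continuousWithinAt)
      fun s hs => ?_
    exact (hg s ⟨by linarith [hs.1], hs.2.trans hx⟩).congr_deriv (hg₁_zero s ⟨hs.1, hs.2.trans hx⟩)
  calc ∫ y, poissonKernel n x y ∂σ = g ‖x‖ :=
        integral_poissonKernel_eq_of_norm_eq hinv (by simp [norm_smul, he])
    _ = g 0 := hconst
    _ = 1 := by
        have h₀ : ∀ᵐ y ∂σ, poissonKernel n ((0 : ℝ) • e) y = 1 := by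
          filter_upwards [hσ] with y hy
          simp [poissonKernel, hy]
        simp only [g]
        rw [integral_congr_ae h₀]
        simp

end InnerProduct

end UnitBall

open UnitBall

/-- Convergence of the harmonic (Poisson kernel) measures of the unit ball towards the Dirac
mass at a boundary point: if `x_k → a` with `‖x_k‖ < 1` and `‖a‖ = 1`, then for every
continuous `φ` on the sphere, `∫ φ(y) (1 − ‖x_k‖²)/‖x_k − y‖ⁿ dσ(y) → φ(a)`. -/
theorem stmt_14 (n : ℕ) (hn : 2 ≤ n)
    (σ : Measure (EuclideanSpace ℝ (Fin n))) [IsProbabilityMeasure σ]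
    (hsupp : ∀ᵐ y ∂σ, ‖y‖ = 1)
    (hinv : ∀ R : EuclideanSpace ℝ (Fin n) ≃ₗᵢ[ℝ] EuclideanSpace ℝ (Fin n),
      Measure.map (⇑R) σ = σ)
    (x : ℕ → EuclideanSpace ℝ (Fin n)) (hx : ∀ k, ‖x k‖ < 1)
    (a : EuclideanSpace ℝ (Fin n)) (ha : ‖a‖ = 1)
    (hxa : Tendsto x atTop (𝓝 a))
    (φ : EuclideanSpace ℝ (Fin n) → ℝ)
    (hφ : ContinuousOn φ (Metric.sphere (0 : EuclideanSpace ℝ (Fin n)) 1)) :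
    Tendsto (fun k => ∫ y, φ y * ((1 - ‖x k‖ ^ 2) / ‖x k - y‖ ^ n) ∂σ) atTop (𝓝 (φ a)) := by
  have hS : MeasurableSet (sphere (0 : EuclideanSpace ℝ (Fin n)) 1) := isClosed_sphere.measurableSet
  have hσS : σ.restrict (sphere 0 1) = σ :=
    Measure.restrict_eq_self_of_ae_mem (by simpa using hsupp)
  have hpeak := tendsto_setIntegral_peak_smul_of_integrableOn_of_tendsto (μ := σ)
    (φ := fun k => poissonKernel n (x k)) hS hS subset_rfl self_mem_nhdsWithin (measure_ne_top _ _)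
    (.of_forall fun k y _ => poissonKernel_nonneg (hx k).le y)
    (fun u hu ha' => tendstoUniformlyOn_poissonKernel hxa ha (hu.mem_nhds ha'))
    (by simp only [hσS, integral_poissonKernel_eq_one hn finrank_euclideanSpace_fin hsupp hinv
          (hx _), tendsto_const_nhds_iff])
    (.of_forall fun k => (continuousOn_sphere_of_continuousOn_compl_diagonal
      continuousOn_poissonKernel (hx k)).aestronglyMeasurable hS)
    (integrable_of_continuousOn_sphere hsupp hφ).integrableOn (hφ a (by simpa using ha))
  rw [hσS] at hpeak
  simpa only [smul_eq_mul, poissonKernel_eq_div, mul_comm] using hpeak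
end

section
/- Let n ≥ 2, let σ denote the uniform probability measure on the unit sphere S^{n−1} ⊂ ℝⁿ, and let a ∈ S^{n−1}. Then ∫_{S^{n−1}} min(1, ‖a − y‖²) · ‖a − y‖^{−n} dσ(y) < ∞; that is, the measure ‖a − y‖^{−n} σ(dy) on S^{n−1} integrates min(1, ‖a − y‖²) and is therefore a Levy measure on the sphere. -/
/-!
Rotation invariance makes all caps `closedBall x ε` with `‖x‖ = 1` equally heavy. A maximal
disjoint family of such caps therefore has at most `σ univ / σ (closedBall a ε)` members, and its
fivefold enlargements cover the shell `1 ≤ ‖z‖ ≤ 1 + ε`, whose volume is at least `ε` times that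
of the unit ball; comparing volumes gives `σ (closedBall a ε) ≲ ε ^ (n - 1)`. On the dyadic shell
`q / 2 < ‖a - y‖ ≤ q` the integrand is `≲ q ^ (2 - n)`, so the shell contributes `≲ q`; the shells
`q = 2⁻ᵏ` give a convergent geometric series, and outside the unit ball the integrand is at most 1.
-/

open MeasureTheory Metric Set Module
open scoped ENNReal

theorem dist_inv_norm_smul_self {E : Type*} [NormedAddCommGroup E] [NormedSpace ℝ E] {z : E}
    (hz : z ≠ 0) : dist z (‖z‖⁻¹ • z) = |‖z‖ - 1| := by
  have hz' : ‖z‖ ≠ 0 := norm_ne_zero_iff.2 hz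
  have : z - ‖z‖⁻¹ • z = (1 - ‖z‖⁻¹) • z := by rw [sub_smul, one_smul]
  rw [dist_eq_norm, this, norm_smul, Real.norm_eq_abs, ← abs_norm z, ← abs_mul, abs_norm,
    sub_mul, inv_mul_cancel₀ hz', one_mul]

section Sphere

variable {E : Type*} [NormedAddCommGroup E] [InnerProductSpace ℝ E] [MeasurableSpace E]
  [BorelSpace E]

theorem measure_closedBall_eq_of_norm_eq {σ : Measure E}
    (hinv : ∀ R : E ≃ₗᵢ[ℝ] E, σ.map R = σ) {x y : E} (h : ‖x‖ = ‖y‖) (r : ℝ) :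
    σ (closedBall x r) = σ (closedBall y r) := by
  set R := (ℝ ∙ (x - y))ᗮ.reflection
  have hRx : R x = y := Submodule.reflection_sub h
  calc σ (closedBall x r) = σ (R ⁻¹' closedBall y r) := by
        rw [← hRx, ← R.coe_toIsometryEquiv, IsometryEquiv.preimage_closedBall]; simp
    _ = σ (closedBall y r) := by
        rw [← Measure.map_apply R.continuous.measurable measurableSet_closedBall, hinv]

theorem card_mul_measure_closedBall_le {σ : Measure E}
    (hinv : ∀ R : E ≃ₗᵢ[ℝ] E, σ.map R = σ) {s : Finset E} {a : E} {r : ℝ}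
    (hs : ∀ y ∈ s, ‖y‖ = ‖a‖) (hdisj : (s : Set E).PairwiseDisjoint (closedBall · r)) :
    s.card * σ (closedBall a r) ≤ σ univ :=
  calc s.card * σ (closedBall a r) = ∑ y ∈ s, σ (closedBall y r) := by
        rw [Finset.sum_congr rfl fun y hy => measure_closedBall_eq_of_norm_eq hinv (hs y hy) r,
          Finset.sum_const, nsmul_eq_mul]
    _ = σ (⋃ y ∈ s, closedBall y r) :=
        (measure_biUnion_finset hdisj fun _ _ => measurableSet_closedBall).symm
    _ ≤ σ univ := measure_mono (subset_univ _)

variable [FiniteDimensional ℝ E]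

theorem le_card_mul_pow_of_sphere_subset_biUnion [Nontrivial E] {s : Finset E} {r ε : ℝ}
    (hr : 0 ≤ r) (hε : 0 < ε) (hs : sphere (0 : E) 1 ⊆ ⋃ y ∈ s, closedBall y r) :
    ε ≤ s.card * (r + ε) ^ finrank ℝ E := by
  set μ : Measure E := Measure.addHaar
  set V := μ.real (ball 0 1)
  have hV : 0 < V := ENNReal.toReal_pos (measure_ball_pos μ 0 one_pos).ne' measure_ball_lt_top.ne
  have hshell : closedBall 0 (1 + ε) \ ball 0 1 ⊆ ⋃ y ∈ s, closedBall y (r + ε) := by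
    rintro z ⟨hz, hz'⟩
    simp only [mem_closedBall_zero_iff, mem_ball_zero_iff, not_lt] at hz hz'
    have hz0 : z ≠ 0 := norm_pos_iff.1 (by linarith)
    have hp : ‖z‖⁻¹ • z ∈ sphere (0 : E) 1 := by
      rw [mem_sphere_zero_iff_norm, norm_smul, norm_inv, norm_norm,
        inv_mul_cancel₀ (norm_ne_zero_iff.2 hz0)]
    obtain ⟨y, hy, hpy⟩ := mem_iUnion₂.1 (hs hp)
    refine mem_iUnion₂.2 ⟨y, hy, ?_⟩
    have hzp := dist_inv_norm_smul_self hz0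
    rw [abs_of_nonneg (by linarith)] at hzp
    rw [mem_closedBall] at hpy ⊢
    linarith [dist_triangle z (‖z‖⁻¹ • z) y]
  have hpow : 1 + ε ≤ (1 + ε) ^ finrank ℝ E :=
    le_self_pow₀ (by linarith) (Module.finrank_pos (R := ℝ) (M := E)).ne'
  have hfin : μ (⋃ y ∈ s, closedBall y (r + ε)) ≠ ⊤ :=
    (measure_biUnion_lt_top s.finite_toSet fun _ _ => measure_closedBall_lt_top).ne
  have : ε * V ≤ s.card * (r + ε) ^ finrank ℝ E * V :=
    calc ε * V ≤ ((1 + ε) ^ finrank ℝ E - 1) * V := by gcongr; linarith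
      _ = μ.real (closedBall 0 (1 + ε)) - μ.real (ball 0 1) := by
          rw [Measure.addHaar_real_closedBall μ _ (by linarith)]; ring
      _ ≤ μ.real (closedBall 0 (1 + ε) \ ball 0 1) := le_measureReal_sdiff
      _ ≤ μ.real (⋃ y ∈ s, closedBall y (r + ε)) := measureReal_mono hshell hfin
      _ ≤ ∑ y ∈ s, μ.real (closedBall y (r + ε)) := measureReal_biUnion_finset_le _ _
      _ = s.card * (r + ε) ^ finrank ℝ E * V := by
          simp only [Measure.addHaar_real_closedBall μ _ (by linarith : 0 ≤ r + ε),
            Finset.sum_const, nsmul_eq_mul, mul_assoc, V]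
  exact le_of_mul_le_mul_right this hV

theorem measure_closedBall_le_of_forall_map_eq {σ : Measure E} [IsFiniteMeasure σ]
    (hinv : ∀ R : E ≃ₗᵢ[ℝ] E, σ.map R = σ) {a : E} (ha : ‖a‖ = 1) {ε : ℝ} (hε : 0 < ε) :
    σ (closedBall a ε) ≤ σ univ * ENNReal.ofReal ((5 * ε) ^ finrank ℝ E / ε) := by
  have : Nontrivial E := ⟨⟨a, 0, ne_zero_of_norm_ne_zero (by rw [ha]; exact one_ne_zero)⟩⟩
  obtain ⟨u, hu, hdisj, hcov⟩ := Vitali.exists_disjoint_subfamily_covering_enlargement_closedBall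
    (sphere (0 : E) 1) id (fun _ => ε) ε (fun _ _ => le_rfl) 4 (by norm_num)
  have hpack (t : Finset E) (ht : ↑t ⊆ u) : t.card * σ (closedBall a ε) ≤ σ univ :=
    card_mul_measure_closedBall_le hinv (fun y hy => by simpa [ha] using hu (ht hy))
      (hdisj.subset ht)
  by_cases h0 : σ (closedBall a ε) = 0
  · simp [h0]
  have hfin : u.Finite := by
    by_contra hinf
    obtain ⟨N, hN⟩ := ENNReal.exists_nat_mul_gt h0 (measure_ne_top σ univ)
    obtain ⟨t, ht, rfl⟩ := Set.Infinite.exists_subset_card_eq hinf N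
    exact (hpack t ht).not_gt hN
  set s := hfin.toFinset
  have hcover : sphere 0 1 ⊆ ⋃ y ∈ s, closedBall y (4 * ε) := fun p hp =>
    let ⟨b, hb, hpb⟩ := hcov p hp
    mem_iUnion₂.2 ⟨b, hfin.mem_toFinset.2 hb, hpb (mem_closedBall_self hε.le)⟩
  have hcard : 1 ≤ s.card * ENNReal.ofReal ((5 * ε) ^ finrank ℝ E / ε) := by
    rw [← ENNReal.ofReal_natCast, ← ENNReal.ofReal_mul (by positivity), ENNReal.one_le_ofReal,
      ← mul_div_assoc, one_le_div hε]
    have := le_card_mul_pow_of_sphere_subset_biUnion (by positivity) hε hcover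
    rwa [show 4 * ε + ε = 5 * ε by ring] at this
  calc σ (closedBall a ε)
      ≤ σ (closedBall a ε) * (s.card * ENNReal.ofReal ((5 * ε) ^ finrank ℝ E / ε)) :=
        le_mul_of_one_le_right' hcard
    _ = s.card * σ (closedBall a ε) * ENNReal.ofReal ((5 * ε) ^ finrank ℝ E / ε) := by ring
    _ ≤ σ univ * ENNReal.ofReal ((5 * ε) ^ finrank ℝ E / ε) := by
        gcongr; exact hpack s (by simp [s])

end Sphere

theorem min_one_sq_mul_inv_pow_le_of_mem_Ioc {d q : ℝ} (n : ℕ) (hq : 0 < q)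
    (hd : d ∈ Ioc (q / 2) q) :
    min 1 (d ^ 2) * (d ^ n)⁻¹ ≤ q ^ 2 * ((q / 2) ^ n)⁻¹ := by
  have hd0 : 0 < d := lt_trans (by positivity) hd.1
  exact mul_le_mul ((min_le_right _ _).trans (pow_le_pow_left₀ hd0.le hd.2 2))
    (inv_anti₀ (by positivity) (pow_le_pow_left₀ (by positivity) hd.1.le n)) (by positivity)
    (by positivity)

theorem lintegral_min_one_sq_mul_inv_pow_dist_lt_top {X : Type*} [PseudoMetricSpace X]
    [MeasurableSpace X] [OpensMeasurableSpace X] {μ : Measure X} [IsFiniteMeasure μ] {a : X}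
    {n : ℕ} {C : ℝ≥0∞} (hC : C ≠ ⊤)
    -- `r ^ n / r` is `r ^ (n - 1)` without truncated subtraction
    (hμ : ∀ r ∈ Ioc (0 : ℝ) 1, μ (closedBall a r) ≤ C * ENNReal.ofReal (r ^ n / r)) :
    ∫⁻ y, ENNReal.ofReal (min 1 (dist a y ^ 2) * (dist a y ^ n)⁻¹) ∂μ < ⊤ := by
  set q : ℕ → ℝ := fun k => (1 / 2) ^ k
  have hq (k : ℕ) : 0 < q k := by positivity
  set shell : ℕ → Set X := fun k => closedBall a (q k) \ closedBall a (q k / 2)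
  set c : ℕ → ℝ≥0∞ := fun k => ENNReal.ofReal (q k ^ 2 * ((q k / 2) ^ n)⁻¹)
  have hpt (y : X) : ENNReal.ofReal (min 1 (dist a y ^ 2) * (dist a y ^ n)⁻¹) ≤
      1 + ∑' k, (shell k).indicator (fun _ => c k) y := by
    rcases (dist_nonneg (x := a) (y := y)).eq_or_lt with h0 | h0
    · simp [← h0]
    rcases le_or_gt (dist a y) 1 with h1 | h1
    · obtain ⟨k, hk⟩ := exists_nat_pow_near_of_lt_one h0 h1 (by norm_num : (0 : ℝ) < 1 / 2)
        (by norm_num)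
      have hk' : dist a y ∈ Ioc (q k / 2) (q k) :=
        ⟨by rw [show q k / 2 = (1 / 2) ^ (k + 1) by simp only [q]; ring]; exact hk.1, hk.2⟩
      have hy : y ∈ shell k :=
        ⟨mem_closedBall'.2 hk'.2, fun h => (mem_closedBall'.1 h).not_gt hk'.1⟩
      calc _ ≤ c k :=
            ENNReal.ofReal_le_ofReal (min_one_sq_mul_inv_pow_le_of_mem_Ioc n (hq k) hk')
        _ = (shell k).indicator (fun _ => c k) y := (indicator_of_mem hy fun _ => c k).symm
        _ ≤ _ := ENNReal.le_tsum k
        _ ≤ _ := le_add_self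
    · refine le_trans ?_ le_self_add
      rw [min_eq_left (one_le_pow₀ h1.le), one_mul]
      exact ENNReal.ofReal_le_one.2 (inv_le_one_of_one_le₀ (one_le_pow₀ h1.le))
  have hterm (k : ℕ) : c k * μ (shell k) ≤ C * ENNReal.ofReal (2 ^ n * q k) :=
    calc c k * μ (shell k) ≤ c k * (C * ENNReal.ofReal (q k ^ n / q k)) := by
          gcongr
          exact (measure_mono sdiff_subset).trans
            (hμ _ ⟨hq k, pow_le_one₀ (by norm_num) (by norm_num)⟩)
      _ = C * ENNReal.ofReal (q k ^ 2 * ((q k / 2) ^ n)⁻¹ * (q k ^ n / q k)) := by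
          rw [mul_left_comm, ← ENNReal.ofReal_mul (by positivity)]
      _ = C * ENNReal.ofReal (2 ^ n * q k) := by
          congr 2
          have := (hq k).ne'
          field_simp
          rw [← mul_pow, div_mul_cancel₀ _ two_ne_zero]
  have hshell (k : ℕ) : MeasurableSet (shell k) :=
    measurableSet_closedBall.diff measurableSet_closedBall
  calc _ ≤ ∫⁻ y, 1 + ∑' k, (shell k).indicator (fun _ => c k) y ∂μ := lintegral_mono hpt
    _ = μ univ + ∑' k, c k * μ (shell k) := by
        rw [lintegral_add_left measurable_const, lintegral_const, one_mul,
          lintegral_tsum fun k => (measurable_const.indicator (hshell k)).aemeasurable]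
        simp_rw [lintegral_indicator_const (hshell _)]
    _ ≤ μ univ + ∑' k, C * ENNReal.ofReal (2 ^ n * q k) :=
        add_le_add le_rfl (ENNReal.tsum_le_tsum hterm)
    _ = μ univ + C * ENNReal.ofReal (∑' k, 2 ^ n * q k) := by
        rw [ENNReal.tsum_mul_left, ENNReal.ofReal_tsum_of_nonneg (fun k => by positivity)
          (summable_geometric_two.mul_left _)]
    _ < ⊤ := by finiteness

theorem stmt_15_general (n : ℕ)
    (σ : Measure (EuclideanSpace ℝ (Fin n))) [IsProbabilityMeasure σ]
    (hinv : ∀ R : EuclideanSpace ℝ (Fin n) ≃ₗᵢ[ℝ] EuclideanSpace ℝ (Fin n),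
      Measure.map (⇑R) σ = σ)
    (a : EuclideanSpace ℝ (Fin n)) (ha : ‖a‖ = 1) :
    ∫⁻ y, ENNReal.ofReal (min 1 (‖a - y‖ ^ 2) * (‖a - y‖ ^ n)⁻¹) ∂σ < ⊤ := by
  have hcap : ∀ r ∈ Ioc (0 : ℝ) 1, σ (closedBall a r) ≤ 5 ^ n * ENNReal.ofReal (r ^ n / r) := by
    intro r hr
    have := measure_closedBall_le_of_forall_map_eq hinv ha hr.1
    rwa [finrank_euclideanSpace_fin, measure_univ, one_mul, mul_pow, mul_div_assoc,
      ENNReal.ofReal_mul (by positivity), ENNReal.ofReal_pow (by norm_num),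
      ENNReal.ofReal_ofNat] at this
  simpa only [dist_eq_norm] using
    lintegral_min_one_sq_mul_inv_pow_dist_lt_top (by finiteness) hcap

/-- The kernel `‖a − y‖^{−n} σ(dy)` on the unit sphere integrates `min(1, ‖a−y‖²)`,
i.e. it is a Levy measure on the sphere. -/
theorem stmt_15 (n : ℕ) (hn : 2 ≤ n)
    (σ : Measure (EuclideanSpace ℝ (Fin n))) [IsProbabilityMeasure σ]
    (hsupp : ∀ᵐ y ∂σ, ‖y‖ = 1)
    (hinv : ∀ R : EuclideanSpace ℝ (Fin n) ≃ₗᵢ[ℝ] EuclideanSpace ℝ (Fin n),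
      Measure.map (⇑R) σ = σ)
    (a : EuclideanSpace ℝ (Fin n)) (ha : ‖a‖ = 1) :
    ∫⁻ y, ENNReal.ofReal (min 1 (‖a - y‖ ^ 2) * (‖a - y‖ ^ n)⁻¹) ∂σ < ⊤ :=
  stmt_15_general n σ hinv a ha
end
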